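/- arXiv:2605.31398 — 4 statements merged into one kernel-verified Lean document; each statement's English description precedes it below -/
import Mathlib

section
/- Let 1/n ≪ ε ≪ ν ≪ α ≤ 1 (read right to left: for every α there exists ν₀, for every ν ≤ ν₀ there exists ε₀, for every ε ≤ ε₀ there exists n₀, and the statement holds for all n ≥ n₀). If D is an (n,α,ε)-edge-color pseudorandom digraph, then for all distinct vertices v,w ∈ V(D), every ⋆ ∈ {→,←}³, and all V′ ⊆ V(D) and C′ ⊆ C(D) with |V′|,|C′| ≥ (1−ν)n, there exists a rainbow path v u₁ u₂ w of length three with orientation ⋆ whose internal vertices u₁,u₂ lie in V′ and all of whose colors lie in C′. -/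
open MeasureTheory Filter
open scoped ENNReal

noncomputable section
open scoped Classical

/-- An edge set on `Fin n` is loopless if no edge goes from a vertex to itself. -/
def Loopless {n : ℕ} (E : Finset (Fin n × Fin n)) : Prop := ∀ e ∈ E, e.1 ≠ e.2

/-- Out-degree of a vertex. -/
def outDeg {n : ℕ} (E : Finset (Fin n × Fin n)) (v : Fin n) : ℕ :=
  (E.filter fun e => e.1 = v).card

/-- In-degree of a vertex. -/
def inDeg {n : ℕ} (E : Finset (Fin n × Fin n)) (v : Fin n) : ℕ :=
  (E.filter fun e => e.2 = v).card

/-- The minimum semi-degree of the digraph is at least `d`. -/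
def MinSemiDegGE {n : ℕ} (E : Finset (Fin n × Fin n)) (d : ℝ) : Prop :=
  ∀ v : Fin n, d ≤ (outDeg E v : ℝ) ∧ d ≤ (inDeg E v : ℝ)

/-- The edge `(uw)^⋆`: forward (from `u` to `w`) if `b = true`, backward otherwise. -/
def dirEdge {n : ℕ} (b : Bool) (u w : Fin n) : Fin n × Fin n := if b then (u, w) else (w, u)

/-- The `i`-th edge of a path `v 0, v 1, …, v k` with orientation `star`
(`star i = true` means the edge is directed from `v i` to `v (i+1)`). -/
def pathEdge {n k : ℕ} (v : Fin (k + 1) → Fin n) (star : Fin k → Bool) (i : Fin k) :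
    Fin n × Fin n :=
  if star i then (v i.castSucc, v i.succ) else (v i.succ, v i.castSucc)

/-- `v` is a rainbow directed path of length `k` with orientation `star` in the
edge-colored digraph `(E, col)`. -/
def IsRainbowPath {n k : ℕ} (E : Finset (Fin n × Fin n)) (col : Fin n × Fin n → Fin n)
    (star : Fin k → Bool) (v : Fin (k + 1) → Fin n) : Prop :=
  Function.Injective v ∧ (∀ i, pathEdge v star i ∈ E) ∧
    Function.Injective fun i => col (pathEdge v star i)

/-- The `i`-th edge of a cycle `w 0, w 1, …, w (k-1)` (indices mod `k`) with
orientation `star`. -/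
def cycEdge {n k : ℕ} (w : ZMod k → Fin n) (star : Fin k → Bool) (i : Fin k) :
    Fin n × Fin n :=
  if star i then (w (i.val : ZMod k), w ((i.val + 1 : ℕ) : ZMod k))
  else (w ((i.val + 1 : ℕ) : ZMod k), w (i.val : ZMod k))

/-- `w` is a directed cycle of length `k` with orientation `star` in the digraph `E`. -/
def IsOrientedCycle {n k : ℕ} (E : Finset (Fin n × Fin n)) (star : Fin k → Bool)
    (w : ZMod k → Fin n) : Prop :=
  Function.Injective w ∧ ∀ i : Fin k, cycEdge w star i ∈ E

/-- `w` is a rainbow directed cycle of length `k` with orientation `star`. -/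
def IsRainbowCycle {n k : ℕ} (E : Finset (Fin n × Fin n)) (col : Fin n × Fin n → Fin n)
    (star : Fin k → Bool) (w : ZMod k → Fin n) : Prop :=
  IsOrientedCycle E star w ∧ Function.Injective fun i : Fin k => col (cycEdge w star i)

/-- `(n,α,ε)`-edge-color pseudorandomness of the edge-colored digraph `(E, col)`. -/
def EdgeColorPseudorandom (n : ℕ) (α ε : ℝ) (E : Finset (Fin n × Fin n))
    (col : Fin n × Fin n → Fin n) : Prop :=
  Loopless E ∧ E.image col = Finset.univ ∧ MinSemiDegGE E (α * n) ∧
  (∀ U W C' : Finset (Fin n), C' ⊆ E.image col →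
    ε * n ≤ (U.card : ℝ) → ε * n ≤ (W.card : ℝ) → ε * n ≤ (C'.card : ℝ) → ∀ b : Bool,
    ∃ u ∈ U, ∃ w ∈ W, dirEdge b u w ∈ E ∧ col (dirEdge b u w) ∈ C') ∧
  (∀ (c v : Fin n) (b : Bool),
    ((E.filter fun e => col e = c ∧ (if b then e.1 else e.2) = v).card : ℝ)
      ≤ n / Real.log n) ∧
  (∀ c : Fin n, ∃ M : Finset (Fin n × Fin n), M ⊆ E ∧ (∀ e ∈ M, col e = c) ∧
    α * n / 3 ≤ (M.card : ℝ) ∧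
    ∀ e ∈ M, ∀ f ∈ M, e ≠ f → e.1 ≠ f.1 ∧ e.1 ≠ f.2 ∧ e.2 ≠ f.1 ∧ e.2 ≠ f.2) ∧
  (∀ c : Fin n, ((E.filter fun e => col e = c).card : ℝ) ≤ 10 * n) ∧
  (∀ (v : Fin n) (b : Bool),
    α * n / 2 ≤ (((E.filter fun e => (if b then e.1 else e.2) = v).image col).card : ℝ))

/-- Vertices appearing in an edge set. -/
def vertsOf {n : ℕ} (AE : Finset (Fin n × Fin n)) : Finset (Fin n) :=
  AE.image Prod.fst ∪ AE.image Prod.snd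

/-- Union of a family of finsets of `Fin n` (indexed by an arbitrary type). -/
def famUnion {n : ℕ} {ι : Sort*} (S : ι → Finset (Fin n)) : Finset (Fin n) :=
  Finset.univ.filter fun x => ∃ i, x ∈ S i

/-- `(AE, s, t)` is an `(S,⋆)`-absorber inside the edge-colored digraph `(E, col)`,
where the family `S` is given by its vertex parts `SV i` and color parts `SC i`. -/
def IsSAbsorber {n : ℕ} (E : Finset (Fin n × Fin n)) (col : Fin n × Fin n → Fin n)
    {k : ℕ} (star : Fin k → Bool) {ι : Sort*} (SV SC : ι → Finset (Fin n))
    (AE : Finset (Fin n × Fin n)) (s t : Fin n) : Prop :=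
  AE ⊆ E ∧ ∀ i : ι, ∃ v : Fin (k + 1) → Fin n,
    v 0 = s ∧ v (Fin.last k) = t ∧ IsRainbowPath AE col star v ∧
    Finset.image v Finset.univ = (vertsOf AE \ famUnion SV) ∪ SV i ∧
    Finset.image (fun j : Fin k => col (pathEdge v star j)) Finset.univ
      = (AE.image col \ famUnion SC) ∪ SC i

/-- `(E, col)` contains an `(S,⋆)`-absorber whose internal vertices lie in `V'` and whose
internal colors lie in `C'`. -/
def HasAbsorber {n : ℕ} (E : Finset (Fin n × Fin n)) (col : Fin n × Fin n → Fin n)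
    {k : ℕ} (star : Fin k → Bool) {ι : Sort*} (SV SC : ι → Finset (Fin n))
    (V' C' : Finset (Fin n)) : Prop :=
  ∃ AE s t, IsSAbsorber E col star SV SC AE s t ∧
    vertsOf AE \ famUnion SV ⊆ V' ∧ AE.image col \ famUnion SC ⊆ C'

/-- `ν`-color-gadget pseudorandomness of the edge-colored digraph `(E, col)`. -/
def ColorGadgetPseudorandom (n : ℕ) (ν : ℝ) (E : Finset (Fin n × Fin n))
    (col : Fin n × Fin n → Fin n) : Prop :=
  ∀ V' C' : Finset (Fin n), C' ⊆ E.image col →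
    (1 - ν) * n ≤ (V'.card : ℝ) → (1 - ν) * n ≤ (C'.card : ℝ) →
    ∀ c₁ c₂ : Fin n, c₁ ∈ E.image col → c₂ ∈ E.image col →
    ∀ star : Fin 7 → Bool,
    HasAbsorber E col star (fun _ : Fin 2 => (∅ : Finset (Fin n)))
      (fun i : Fin 2 => if i = 0 then {c₁} else {c₂}) V' C'

/-- Bernoulli measure on `Bool` with success probability (the truncation of) `p`. -/
def bernoulliMeasure (p : ℝ) : Measure Bool :=
  (PMF.bernoulli (min (Real.toNNReal p) 1) (min_le_right _ _)).toMeasure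

/-- Uniform probability measure on a finite type. -/
def uniformMeasure (α : Type*) [MeasurableSpace α] [Fintype α] : Measure α :=
  (Fintype.card α : ℝ≥0∞)⁻¹ • Measure.count

/-- Sample space for the randomly perturbed, randomly colored digraph: the first component
decides which random edges are present, the second gives the random coloring of all
potential edges with colors from `Fin n`. -/
abbrev PerturbSpace (n : ℕ) := ((Fin n × Fin n) → Bool) × ((Fin n × Fin n) → Fin n)

/-- The law of `D(n, C/n)` together with an independent uniform coloring from `[n]`. -/
def perturbedMeasure (n : ℕ) (C : ℝ) : Measure (PerturbSpace n) :=
  (Measure.pi fun _ : Fin n × Fin n => bernoulliMeasure (C / n)).prod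
    (Measure.pi fun _ : Fin n × Fin n => uniformMeasure (Fin n))

/-- The edge set of `D₀ ∪ D(n, C/n)` given the random outcome `ω` for the random edges. -/
def unionEdges {n : ℕ} (D₀ : Finset (Fin n × Fin n)) (ω : (Fin n × Fin n) → Bool) :
    Finset (Fin n × Fin n) :=
  D₀ ∪ Finset.univ.filter fun e => e.1 ≠ e.2 ∧ ω e = true

end


lemma dirEdge_swap {n : ℕ} (b : Bool) (u w : Fin n) : dirEdge b u w = dirEdge (!b) w u := by
  cases b <;> rfl

lemma filter_card_lb_inj {β γ : Type*} (S : Finset β) (p : β → Prop) [DecidablePred p]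
    (f : β → γ) (hf : Set.InjOn f S) (T : Finset γ)
    (hT : ∀ x ∈ S, ¬ p x → f x ∈ T) :
    (S.card : ℝ) - T.card ≤ ((S.filter p).card : ℝ) := by
  have h1 : (S.filter p).card + (S.filter fun x => ¬ p x).card = S.card :=
    Finset.card_filter_add_card_filter_not p
  have h2 : (S.filter fun x => ¬ p x).card ≤ T.card := by
    apply Finset.card_le_card_of_injOn f
    · intro x hx
      rw [Finset.mem_coe, Finset.mem_filter] at hx
      exact hT x hx.1 hx.2
    · exact hf.mono (Finset.coe_subset.2 (Finset.filter_subset _ _))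
  have h1' : ((S.filter p).card : ℝ) + ((S.filter fun x => ¬ p x).card : ℝ) = S.card := by
    exact_mod_cast h1
  have h2' : ((S.filter fun x => ¬ p x).card : ℝ) ≤ T.card := by exact_mod_cast h2
  linarith

lemma vertex_count {n : ℕ} (E : Finset (Fin n × Fin n)) (col : Fin n × Fin n → Fin n)
    {α : ℝ} (v : Fin n) (b : Bool)
    (h7 : α * n / 2 ≤ (((E.filter fun e => (if b then e.1 else e.2) = v).image col).card : ℝ))
    (P Q : Fin n → Prop) [DecidablePred P] [DecidablePred Q] :
    α * n / 2 - ((Finset.univ.filter fun c => ¬ Q c).card : ℝ)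
      - ((Finset.univ.filter fun u => ¬ P u).card : ℝ)
    ≤ ((Finset.univ.filter fun u => P u ∧ dirEdge b v u ∈ E ∧ Q (col (dirEdge b v u))).card : ℝ) := by
  set F := E.filter fun e => (if b then e.1 else e.2) = v with hF
  set oth : Fin n × Fin n → Fin n := fun e => if b then e.2 else e.1 with hoth
  have hrepr : ∀ e ∈ F, dirEdge b v (oth e) = e := by
    rintro ⟨e1, e2⟩ he
    rw [hF, Finset.mem_filter] at he
    cases b <;> simp_all [dirEdge, hoth]
  have hinj : Set.InjOn oth (F : Set (Fin n × Fin n)) := by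
    intro e he f hf h
    rw [← hrepr e he, ← hrepr f hf, h]
  set F' := F.filter (fun e => Q (col e)) with hF'
  have step1 : α * n / 2 - ((Finset.univ.filter fun c => ¬ Q c).card : ℝ) ≤ (F'.card : ℝ) := by
    have ha : ((F.image col).card : ℝ) - ((Finset.univ.filter fun c => ¬ Q c).card : ℝ)
        ≤ (((F.image col).filter Q).card : ℝ) :=
      filter_card_lb_inj _ _ id (Function.injective_id.injOn) _ (fun c _ hc => by simp [hc])
    have hb : ((F.image col).filter Q) ⊆ F'.image col := by
      intro c hc
      rw [Finset.mem_filter, Finset.mem_image] at hc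
      obtain ⟨⟨e, he, rfl⟩, hQ⟩ := hc
      exact Finset.mem_image.2 ⟨e, Finset.mem_filter.2 ⟨he, hQ⟩, rfl⟩
    have hc : (F'.image col).card ≤ F'.card := Finset.card_image_le
    have hb' : ((F.image col).filter Q).card ≤ (F'.image col).card := Finset.card_le_card hb
    have hd : (((F.image col).filter Q).card : ℝ) ≤ (F'.card : ℝ) := by
      exact_mod_cast le_trans hb' hc
    linarith
  set F'' := F'.filter (fun e => P (oth e)) with hF''
  have step2 : (F'.card : ℝ) - ((Finset.univ.filter fun u => ¬ P u).card : ℝ) ≤ (F''.card : ℝ) :=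
    filter_card_lb_inj F' _ oth (hinj.mono (Finset.coe_subset.2 (Finset.filter_subset _ _))) _
      (fun e _ hp => by simp [hp])
  have step3 : (F''.card : ℝ) ≤ ((Finset.univ.filter fun u =>
      P u ∧ dirEdge b v u ∈ E ∧ Q (col (dirEdge b v u))).card : ℝ) := by
    have : F''.card ≤ (Finset.univ.filter fun u =>
        P u ∧ dirEdge b v u ∈ E ∧ Q (col (dirEdge b v u))).card := by
      apply Finset.card_le_card_of_injOn oth
      · intro e he
        have heF' : e ∈ F' := (Finset.mem_filter.1 he).1
        have heF : e ∈ F := (Finset.mem_filter.1 heF').1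
        have hP : P (oth e) := (Finset.mem_filter.1 he).2
        have hQ : Q (col e) := (Finset.mem_filter.1 heF').2
        have hE : e ∈ E := (Finset.mem_filter.1 heF).1
        rw [Finset.mem_coe, Finset.mem_filter]
        refine ⟨Finset.mem_univ _, hP, ?_, ?_⟩
        · rw [hrepr e heF]; exact hE
        · rw [hrepr e heF]; exact hQ
      · exact hinj.mono (by
          intro e he
          exact Finset.filter_subset _ _ (Finset.filter_subset _ _ he))
    exact_mod_cast this
  linarith



lemma inj4 {n : ℕ} {x u₁ u₂ y : Fin n} (h1 : x ≠ y) (h2 : u₁ ≠ x) (h3 : u₁ ≠ y)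
    (h4 : u₂ ≠ x) (h5 : u₂ ≠ y) (h6 : u₁ ≠ u₂) : Function.Injective ![x, u₁, u₂, y] := by
  intro i j hij
  fin_cases i <;> fin_cases j <;> simp_all

lemma inj3 {γ : Type*} (f : Fin 3 → γ) (h01 : f 0 ≠ f 1) (h12 : f 1 ≠ f 2)
    (h02 : f 0 ≠ f 2) : Function.Injective f := by
  intro i j hij
  fin_cases i <;> fin_cases j <;> simp_all

lemma forall_fin3 {p : Fin 3 → Prop} (h0 : p 0) (h1 : p 1) (h2 : p 2) : ∀ i, p i := by
  intro i
  fin_cases i <;> assumption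

set_option maxHeartbeats 1000000 in
theorem stmt4 :
    ∀ α : ℝ, 0 < α → α ≤ 1 → ∃ ν₀ : ℝ, 0 < ν₀ ∧
    ∀ ν : ℝ, 0 < ν → ν ≤ ν₀ → ∃ ε₀ : ℝ, 0 < ε₀ ∧
    ∀ ε : ℝ, 0 < ε → ε ≤ ε₀ → ∃ n₀ : ℕ, ∀ n : ℕ, n₀ ≤ n →
    ∀ (E : Finset (Fin n × Fin n)) (col : Fin n × Fin n → Fin n),
    EdgeColorPseudorandom n α ε E col →
    ∀ x y : Fin n, x ≠ y → ∀ star : Fin 3 → Bool,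
    ∀ V' C' : Finset (Fin n), C' ⊆ E.image col →
    (1 - ν) * n ≤ (V'.card : ℝ) → (1 - ν) * n ≤ (C'.card : ℝ) →
    ∃ u₁ u₂ : Fin n, u₁ ∈ V' ∧ u₂ ∈ V' ∧
      IsRainbowPath E col star ![x, u₁, u₂, y] ∧
      ∀ i : Fin 3, col (pathEdge ![x, u₁, u₂, y] star i) ∈ C' := by
  classical
  intro α hα0 hα1
  refine ⟨α/100, by positivity, ?_⟩
  intro ν hν0 hνα
  refine ⟨ν/100, by positivity, ?_⟩
  intro ε hε0 hεν
  refine ⟨⌈(1000000:ℝ)/ε⌉₊, ?_⟩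
  intro n hn E col hpr x y hxy star V' C' hC'sub hV' hC'
  obtain ⟨hloop, himg, hdeg, h4, h5, h6, h7, h8⟩ := hpr
  have hn' : ((1000000:ℝ)/ε) ≤ n := le_trans (Nat.le_ceil _) (Nat.cast_le.2 hn)
  have hεn : (1000000:ℝ) ≤ ε * n := by
    rw [div_le_iff₀ hε0] at hn'
    linarith
  have hnpos : (0:ℝ) ≤ n := Nat.cast_nonneg n
  have hc1 : ν * n ≤ α * n / 100 := by nlinarith
  have hc2 : ε * n ≤ ν * n / 100 := by nlinarith
  have hεn' : ε * n ≤ (n:ℝ) := by nlinarith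
  set m := ⌈ε * n⌉₊ with hm
  have hm1 : (m:ℝ) ≤ ε * n + 1 := le_of_lt (Nat.ceil_lt_add_one (by positivity))
  have hm2 : ε * n ≤ (m:ℝ) := Nat.le_ceil _
  have hC'c : ((C'ᶜ).card : ℝ) ≤ ν * n := by
    have h2 : C'.card ≤ n := le_trans (Finset.card_le_univ _) (by simp)
    have h1 : (C'ᶜ).card = n - C'.card := by simp [Finset.card_compl]
    rw [h1, Nat.cast_sub h2]
    linarith
  have hV'c : ((V'ᶜ).card : ℝ) ≤ ν * n := by
    have h2 : V'.card ≤ n := le_trans (Finset.card_le_univ _) (by simp)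
    have h1 : (V'ᶜ).card = n - V'.card := by simp [Finset.card_compl]
    rw [h1, Nat.cast_sub h2]
    linarith
  -- the set of candidates for u₂
  have key2 := vertex_count E col y (!(star 2)) (h8 y (!(star 2)))
    (fun u => u ∈ V' ∧ u ≠ x ∧ u ≠ y) (fun c => c ∈ C')
  set U₂ := Finset.univ.filter fun u => (u ∈ V' ∧ u ≠ x ∧ u ≠ y) ∧
      dirEdge (!(star 2)) y u ∈ E ∧ (col (dirEdge (!(star 2)) y u) ∈ C') with hU₂
  have hQ2 : ((Finset.univ.filter fun c => ¬ (c ∈ C')).card : ℝ) ≤ ν * n := by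
    refine le_trans ?_ hC'c
    have : (Finset.univ.filter fun c => ¬ (c ∈ C')) ⊆ C'ᶜ := by
      intro c hc; simp only [Finset.mem_filter] at hc; simp [hc.2]
    exact_mod_cast Finset.card_le_card this
  have hP2 : ((Finset.univ.filter fun u => ¬ (u ∈ V' ∧ u ≠ x ∧ u ≠ y)).card : ℝ) ≤ ν * n + 2 := by
    have hsub : (Finset.univ.filter fun u => ¬ (u ∈ V' ∧ u ≠ x ∧ u ≠ y)) ⊆ V'ᶜ ∪ {x, y} := by
      intro u hu; simp only [Finset.mem_filter] at hu
      simp only [Finset.mem_union, Finset.mem_compl, Finset.mem_insert, Finset.mem_singleton]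
      tauto
    have h2 : ({x, y} : Finset (Fin n)).card ≤ 2 :=
      le_trans (Finset.card_insert_le _ _) (by simp)
    have := le_trans (Finset.card_le_card hsub) (Finset.card_union_le _ _)
    have hcast : ((Finset.univ.filter fun u => ¬ (u ∈ V' ∧ u ≠ x ∧ u ≠ y)).card : ℝ)
        ≤ ((V'ᶜ).card : ℝ) + (({x, y} : Finset (Fin n)).card : ℝ) := by exact_mod_cast this
    have h2' : (({x, y} : Finset (Fin n)).card : ℝ) ≤ 2 := by exact_mod_cast h2
    linarith
  have hU₂card : (m : ℝ) ≤ (U₂.card : ℝ) := by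
    rw [hU₂]; linarith [key2]
  obtain ⟨U₂', hU₂'sub, hU₂'card⟩ := Finset.exists_subset_card_eq (Nat.cast_le.1
    (by exact_mod_cast hU₂card) : m ≤ U₂.card)
  set B := U₂'.image fun u => col (dirEdge (star 2) u y) with hB
  have hBcard : (B.card : ℝ) ≤ m := by
    exact_mod_cast le_trans Finset.card_image_le (le_of_eq hU₂'card)
  -- the set of candidates for u₁
  have key1 := vertex_count E col x (star 0) (h8 x (star 0))
    (fun u => u ∈ V' ∧ u ≠ x ∧ u ≠ y ∧ u ∉ U₂') (fun c => c ∈ C' ∧ c ∉ B)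
  set U₁ := Finset.univ.filter fun u => (u ∈ V' ∧ u ≠ x ∧ u ≠ y ∧ u ∉ U₂') ∧
      dirEdge (star 0) x u ∈ E ∧ (col (dirEdge (star 0) x u) ∈ C' ∧ col (dirEdge (star 0) x u) ∉ B) with hU₁
  have hQ1 : ((Finset.univ.filter fun c => ¬ (c ∈ C' ∧ c ∉ B)).card : ℝ) ≤ ν * n + m := by
    have hsub : (Finset.univ.filter fun c => ¬ (c ∈ C' ∧ c ∉ B)) ⊆ C'ᶜ ∪ B := by
      intro c hc; simp only [Finset.mem_filter] at hc
      simp only [Finset.mem_union, Finset.mem_compl]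
      tauto
    have := le_trans (Finset.card_le_card hsub) (Finset.card_union_le _ _)
    have hcast : ((Finset.univ.filter fun c => ¬ (c ∈ C' ∧ c ∉ B)).card : ℝ)
        ≤ ((C'ᶜ).card : ℝ) + (B.card : ℝ) := by exact_mod_cast this
    linarith
  have hP1 : ((Finset.univ.filter fun u => ¬ (u ∈ V' ∧ u ≠ x ∧ u ≠ y ∧ u ∉ U₂')).card : ℝ)
      ≤ ν * n + 2 + m := by
    have hsub : (Finset.univ.filter fun u => ¬ (u ∈ V' ∧ u ≠ x ∧ u ≠ y ∧ u ∉ U₂'))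
        ⊆ (V'ᶜ ∪ {x, y}) ∪ U₂' := by
      intro u hu; simp only [Finset.mem_filter] at hu
      simp only [Finset.mem_union, Finset.mem_compl, Finset.mem_insert, Finset.mem_singleton]
      tauto
    have h2 : ({x, y} : Finset (Fin n)).card ≤ 2 :=
      le_trans (Finset.card_insert_le _ _) (by simp)
    have := le_trans (Finset.card_le_card hsub)
      (le_trans (Finset.card_union_le _ _)
        (add_le_add_left (Finset.card_union_le _ _) _))
    have hcast : ((Finset.univ.filter fun u => ¬ (u ∈ V' ∧ u ≠ x ∧ u ≠ y ∧ u ∉ U₂')).card : ℝ)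
        ≤ ((V'ᶜ).card : ℝ) + (({x, y} : Finset (Fin n)).card : ℝ) + (U₂'.card : ℝ) := by
      exact_mod_cast this
    have h2' : (({x, y} : Finset (Fin n)).card : ℝ) ≤ 2 := by exact_mod_cast h2
    have h3' : ((U₂'.card : ℕ) : ℝ) = m := by exact_mod_cast hU₂'card
    linarith
  have hU₁card : (m : ℝ) ≤ (U₁.card : ℝ) := by
    rw [hU₁]; linarith [key1]
  obtain ⟨U₁', hU₁'sub, hU₁'card⟩ := Finset.exists_subset_card_eq (Nat.cast_le.1
    (by exact_mod_cast hU₁card) : m ≤ U₁.card)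
  set B₁ := U₁'.image fun u => col (dirEdge (star 0) x u) with hB₁
  have hB₁card : (B₁.card : ℝ) ≤ m := by
    exact_mod_cast le_trans Finset.card_image_le (le_of_eq hU₁'card)
  set C'' := C' \ (B ∪ B₁) with hC''
  have hC''card : ε * n ≤ (C''.card : ℝ) := by
    have h1 : C'.card ≤ C''.card + (B ∪ B₁).card := Finset.card_le_card_sdiff_add_card
    have h2 : (B ∪ B₁).card ≤ B.card + B₁.card := Finset.card_union_le _ _
    have h1' : (C'.card : ℝ) ≤ (C''.card : ℝ) + ((B.card : ℝ) + (B₁.card : ℝ)) := by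
      have h3 := le_trans h1 (add_le_add_right h2 _)
      exact_mod_cast h3
    have hνn' : ν * n ≤ (n:ℝ) / 100 := by nlinarith
    linarith
  -- apply pseudorandomness between U₁' and U₂'
  obtain ⟨u₁, hu₁, u₂, hu₂, hemid, hcmid⟩ := h4 U₁' U₂' C''
    (by rw [himg]; exact Finset.subset_univ _)
    (by rw [hU₁'card]; exact hm2) (by rw [hU₂'card]; exact hm2) hC''card (star 1)
  have hu₁U₁ := hU₁'sub hu₁
  rw [hU₁, Finset.mem_filter] at hu₁U₁
  obtain ⟨-, ⟨hu₁V, hu₁x, hu₁y, hu₁U₂'⟩, he₁E, hc₁C', hc₁B⟩ := hu₁U₁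
  have hu₂U₂ := hU₂'sub hu₂
  rw [hU₂, Finset.mem_filter] at hu₂U₂
  obtain ⟨-, ⟨hu₂V, hu₂x, hu₂y⟩, he₃E', hc₃C'⟩ := hu₂U₂
  have he₃eq : dirEdge (star 2) u₂ y = dirEdge (!(star 2)) y u₂ := dirEdge_swap _ _ _
  have he₃E : dirEdge (star 2) u₂ y ∈ E := by rw [he₃eq]; exact he₃E'
  have hc₃C : col (dirEdge (star 2) u₂ y) ∈ C' := by rw [he₃eq]; exact hc₃C'
  have hc₃B : col (dirEdge (star 2) u₂ y) ∈ B :=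
    Finset.mem_image.2 ⟨u₂, hu₂, rfl⟩
  have hc₁B₁ : col (dirEdge (star 0) x u₁) ∈ B₁ :=
    Finset.mem_image.2 ⟨u₁, hu₁, rfl⟩
  have hcmid' := Finset.mem_sdiff.1 hcmid
  have hcmidC' : col (dirEdge (star 1) u₁ u₂) ∈ C' := hcmid'.1
  have hcmidB : col (dirEdge (star 1) u₁ u₂) ∉ B := fun h =>
    hcmid'.2 (Finset.mem_union.2 (Or.inl h))
  have hcmidB₁ : col (dirEdge (star 1) u₁ u₂) ∉ B₁ := fun h =>
    hcmid'.2 (Finset.mem_union.2 (Or.inr h))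
  have hu₁u₂ : u₁ ≠ u₂ := fun h => hu₁U₂' (h ▸ hu₂)
  -- pathEdge computations
  have pe0 : pathEdge ![x, u₁, u₂, y] star 0 = dirEdge (star 0) x u₁ := by
    simp [pathEdge, dirEdge]
  have pe1 : pathEdge ![x, u₁, u₂, y] star 1 = dirEdge (star 1) u₁ u₂ := by
    simp [pathEdge, dirEdge]
  have pe2 : pathEdge ![x, u₁, u₂, y] star 2 = dirEdge (star 2) u₂ y := by
    simp [pathEdge, dirEdge, show (Fin.castSucc 2 : Fin 4) = 2 from rfl]
  -- distinct colors
  have hne01 : col (pathEdge ![x, u₁, u₂, y] star 0) ≠ col (pathEdge ![x, u₁, u₂, y] star 1) := by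
    rw [pe0, pe1]; intro h; exact hcmidB₁ (h ▸ hc₁B₁)
  have hne12 : col (pathEdge ![x, u₁, u₂, y] star 1) ≠ col (pathEdge ![x, u₁, u₂, y] star 2) := by
    rw [pe1, pe2]; intro h; exact hcmidB (h.symm ▸ hc₃B)
  have hne02 : col (pathEdge ![x, u₁, u₂, y] star 0) ≠ col (pathEdge ![x, u₁, u₂, y] star 2) := by
    rw [pe0, pe2]; intro h; exact hc₁B (h.symm ▸ hc₃B)
  refine ⟨u₁, u₂, hu₁V, hu₂V, ⟨?_, ?_, ?_⟩, ?_⟩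
  · exact inj4 hxy hu₁x hu₁y hu₂x hu₂y hu₁u₂
  · exact forall_fin3 (pe0 ▸ he₁E) (pe1 ▸ hemid) (pe2 ▸ he₃E)
  · exact inj3 _ hne01 hne12 hne02
  · exact forall_fin3 (pe0 ▸ hc₁C') (pe1 ▸ hcmidC') (pe2 ▸ hc₃C)
end

section
/- Let 1/n ≪ ε ≪ α ≤ 1 (read right to left: for every α there exists ε₀, for every ε ≤ ε₀ there exists n₀, and the statement holds for all n ≥ n₀). Let k be a positive integer and ⋆ ∈ {→,←}^{k−1}. Let D be an (n,α,ε)-edge-color pseudorandom digraph, let 𝒟 ⊆ C(D) be a color set with |𝒟| ≥ kεn, and let A₁,…,A_k ⊆ V(D) be pairwise disjoint sets with |A_i| ≥ 2εn for every i. Then there is a rainbow path v₁ v₂ … v_k in D with v_i ∈ A_i for every i ∈ [k], such that for every i ∈ [k−1] the edge between v_i and v_{i+1} is present with direction ⋆_i and has color in 𝒟. -/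
open MeasureTheory Filter
open scoped ENNReal

section AuxLemmas

open scoped Classical

lemma inj_of_disjoint {n m : ℕ} {A : Fin m → Finset (Fin n)}
    (hd : ∀ i j, i ≠ j → Disjoint (A i) (A j)) {v : Fin m → Fin n}
    (hv : ∀ i, v i ∈ A i) : Function.Injective v := by
  intro i j h
  by_contra hne
  exact Finset.disjoint_left.mp (hd i j hne) (hv i) (h ▸ hv j)

lemma aux_path (n : ℕ) (ε : ℝ) (hε : 0 < ε) (hεn : 1 ≤ ε ^ 2 * n)
    (E : Finset (Fin n × Fin n)) (col : Fin n × Fin n → Fin n)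
    (hpr2 : ∀ U W C' : Finset (Fin n), C' ⊆ E.image col →
      ε * n ≤ (U.card : ℝ) → ε * n ≤ (W.card : ℝ) → ε * n ≤ (C'.card : ℝ) → ∀ b : Bool,
      ∃ u ∈ U, ∃ w ∈ W, dirEdge b u w ∈ E ∧ col (dirEdge b u w) ∈ C') :
    ∀ (k : ℕ) (star : Fin k → Bool) (𝒟 : Finset (Fin n)), 𝒟 ⊆ E.image col →
      ((k : ℝ) + 1) * ε * n ≤ (𝒟.card : ℝ) →
      ∀ A : Fin (k + 1) → Finset (Fin n),
      (∀ i j, i ≠ j → Disjoint (A i) (A j)) →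
      (∀ i : Fin k, 2 * ε * n ≤ ((A i.castSucc).card : ℝ)) →
      (ε * n ≤ ((A (Fin.last k)).card : ℝ)) →
      ∃ v : Fin (k + 1) → Fin n, (∀ i, v i ∈ A i) ∧ IsRainbowPath E col star v ∧
        ∀ i : Fin k, col (pathEdge v star i) ∈ 𝒟 := by
  have hεnpos : 0 < ε * n := by nlinarith
  intro k
  induction k with
  | zero =>
    intro star 𝒟 _ _ A hdisj _ hlast
    have hpos : 0 < (A (Fin.last 0)).card := by exact_mod_cast hεnpos.trans_le hlast
    obtain ⟨v0, hv0⟩ := Finset.card_pos.mp hpos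
    haveI : Subsingleton (Fin (0 + 1)) := Fin.subsingleton_one
    refine ⟨fun _ => v0, ?_, ⟨Function.injective_of_subsingleton _,
      fun i => i.elim0, Function.injective_of_subsingleton _⟩, fun i => i.elim0⟩
    intro i
    have : i = Fin.last 0 := Subsingleton.elim _ _
    rw [this]; exact hv0
  | succ k IH =>
    intro star 𝒟 h𝒟sub h𝒟card A hdisj hAsize hAlast
    classical
    set b := star (Fin.last k) with hb
    set Alast := A (Fin.last (k + 1)) with hAl
    set Apre := A ((Fin.last k).castSucc) with hAp
    have hApre : 2 * ε * n ≤ (Apre.card : ℝ) := hAsize (Fin.last k)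
    set N : Fin n → Finset (Fin n) := fun u =>
      𝒟.filter fun c => ∃ w ∈ Alast, dirEdge b u w ∈ E ∧ col (dirEdge b u w) = c with hN
    set G := Apre.filter (fun u => k + 1 ≤ (N u).card) with hGdef
    -- bound on k
    have hsum : ((k : ℝ) + 2) * (ε * n) ≤ (n : ℝ) := by
      have h1 : (Finset.univ.biUnion A).card = ∑ i, (A i).card :=
        Finset.card_biUnion fun i _ j _ hij => hdisj i j hij
      have h2 : (Finset.univ.biUnion A).card ≤ n := by
        simpa using Finset.card_le_univ (Finset.univ.biUnion A)
      have h3 : ∀ i : Fin (k + 2), ε * n ≤ ((A i).card : ℝ) := by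
        intro i
        refine Fin.lastCases ?_ ?_ i
        · exact hAlast
        · intro j; nlinarith [hAsize j]
      have h4 : ((k : ℝ) + 2) * (ε * n) ≤ ∑ i, ((A i).card : ℝ) := by
        calc ((k : ℝ) + 2) * (ε * n) = ∑ _i : Fin (k + 2), ε * n := by
              rw [Finset.sum_const, Finset.card_univ]
              push_cast [Fintype.card_fin]
              ring
          _ ≤ _ := Finset.sum_le_sum fun i _ => h3 i
      have h5 : (∑ i, ((A i).card : ℝ)) ≤ (n : ℝ) := by
        have := h1 ▸ h2
        exact_mod_cast this
      linarith
    have hnn : (n : ℝ) ≤ (ε * n) * (ε * n) := by nlinarith [Nat.cast_nonneg (α := ℝ) n]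
    have hk : (k : ℝ) ≤ ε * n := by nlinarith [Nat.cast_nonneg (α := ℝ) k]
    -- the good set G is large
    have hG : ε * n ≤ (G.card : ℝ) := by
      by_contra hcon
      push_neg at hcon
      have hGsub : G ⊆ Apre := Finset.filter_subset _ _
      have hBcard : ε * n ≤ ((Apre \ G).card : ℝ) := by
        rw [Finset.card_sdiff_of_subset hGsub, Nat.cast_sub (Finset.card_le_card hGsub)]
        linarith
      set m := ⌈ε * n⌉₊ with hm
      have hmB : m ≤ (Apre \ G).card := Nat.ceil_le.mpr hBcard
      obtain ⟨B', hB'sub, hB'card⟩ := Finset.exists_subset_card_eq hmB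
      set X := B'.biUnion N with hX
      have hXsub : X ⊆ 𝒟 := Finset.biUnion_subset.mpr fun u _ => Finset.filter_subset _ _
      have hXcard : (X.card : ℝ) ≤ (k : ℝ) * m := by
        have h1 : X.card ≤ ∑ u ∈ B', (N u).card := Finset.card_biUnion_le
        have h2 : ∑ u ∈ B', (N u).card ≤ ∑ _u ∈ B', k := by
          refine Finset.sum_le_sum fun u hu => ?_
          have hu' : u ∈ Apre \ G := hB'sub hu
          have : ¬ (k + 1 ≤ (N u).card) := by
            intro hle
            exact (Finset.mem_sdiff.mp hu').2
              (Finset.mem_filter.mpr ⟨(Finset.mem_sdiff.mp hu').1, hle⟩)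
          omega
        have h3 : X.card ≤ k * m := by
          calc X.card ≤ ∑ _u ∈ B', k := le_trans h1 h2
            _ = k * m := by rw [Finset.sum_const, hB'card]; ring
        exact_mod_cast h3
      have hmub : (m : ℝ) < ε * n + 1 := Nat.ceil_lt_add_one hεnpos.le
      have hmlb : ε * n ≤ (m : ℝ) := Nat.le_ceil _
      have hC'card : ε * n ≤ (((𝒟 \ X).card : ℝ)) := by
        rw [Finset.card_sdiff_of_subset hXsub, Nat.cast_sub (Finset.card_le_card hXsub)]
        push_cast at h𝒟card ⊢
        nlinarith
      obtain ⟨u, huB', w, hw, hedge, hcol⟩ :=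
        hpr2 B' Alast (𝒟 \ X) ((Finset.sdiff_subset).trans h𝒟sub)
          (by rw [hB'card]; exact hmlb) hAlast hC'card b
      have hcN : col (dirEdge b u w) ∈ N u :=
        Finset.mem_filter.mpr ⟨(Finset.mem_sdiff.mp hcol).1, w, hw, hedge, rfl⟩
      exact (Finset.mem_sdiff.mp hcol).2 (Finset.mem_biUnion.mpr ⟨u, huB', hcN⟩)
    -- apply the induction hypothesis
    set star' : Fin k → Bool := fun j => star j.castSucc with hstar'
    set A' : Fin (k + 1) → Finset (Fin n) :=
      fun i => if i = Fin.last k then G else A i.castSucc with hA'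
    have hA'sub : ∀ i, A' i ⊆ A i.castSucc := by
      intro i
      by_cases h : i = Fin.last k
      · subst h
        simp only [hA', if_pos rfl]
        exact (Finset.filter_subset _ _)
      · simp only [hA', if_neg h]
        exact Finset.Subset.refl _
    obtain ⟨v', hv'mem, ⟨hv'inj, hv'edge, hv'colinj⟩, hv'col⟩ :=
      IH star' 𝒟 h𝒟sub (by push_cast at h𝒟card ⊢; nlinarith) A'
        (fun i j hij => Finset.disjoint_of_subset_left (hA'sub i)
          (Finset.disjoint_of_subset_right (hA'sub j)
            (hdisj _ _ (fun h => hij (Fin.castSucc_injective _ h)))))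
        (by
          intro j
          have hne : j.castSucc ≠ Fin.last k := (Fin.castSucc_lt_last j).ne
          simp only [hA', if_neg hne]
          exact hAsize j.castSucc)
        (by simp only [hA', if_pos rfl]; exact hG)
    have hmem : ∀ i, v' i ∈ A i.castSucc := fun i => hA'sub i (hv'mem i)
    set u := v' (Fin.last k) with hu
    have huG : u ∈ G := by
      have := hv'mem (Fin.last k)
      simpa only [hA', if_pos rfl] using this
    have huN : k + 1 ≤ (N u).card := (Finset.mem_filter.mp huG).2
    set S := Finset.image (fun j : Fin k => col (pathEdge v' star' j)) Finset.univ with hS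
    have hScard : S.card ≤ k := le_trans Finset.card_image_le (by simp)
    have : ¬ (N u ⊆ S) := fun hsub => by
      have := Finset.card_le_card hsub
      omega
    obtain ⟨c, hcN, hcS⟩ := Finset.not_subset.mp this
    obtain ⟨hc𝒟, w, hwAlast, hew, hcw⟩ := Finset.mem_filter.mp hcN
    set v : Fin (k + 2) → Fin n := Fin.snoc v' w with hv
    have hvmem : ∀ i, v i ∈ A i := by
      refine Fin.lastCases ?_ ?_
      · simpa only [hv, Fin.snoc_last] using hwAlast
      · intro j
        simpa only [hv, Fin.snoc_castSucc] using hmem j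
    have hedgecast : ∀ j : Fin k, pathEdge v star j.castSucc = pathEdge v' star' j := by
      intro j
      simp only [pathEdge, hstar', hv, Fin.succ_castSucc, Fin.snoc_castSucc]
    have hedgelast : pathEdge v star (Fin.last k) = dirEdge b u w := by
      simp only [pathEdge, dirEdge, hb, hu, hv, Fin.succ_last, Fin.snoc_last,
        Fin.snoc_castSucc]
    have hcols : ∀ j : Fin k,
        col (pathEdge v star j.castSucc) = col (pathEdge v' star' j) :=
      fun j => congrArg col (hedgecast j)
    have hclast : col (pathEdge v star (Fin.last k)) = c := by
      rw [hedgelast]; exact hcw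
    refine ⟨v, hvmem, ⟨inj_of_disjoint hdisj hvmem, ?_, ?_⟩, ?_⟩
    · refine Fin.lastCases ?_ ?_
      · rw [hedgelast]; exact hew
      · intro j; rw [hedgecast j]; exact hv'edge j
    · intro i1 i2 hEq
      simp only at hEq
      rcases Fin.eq_castSucc_or_eq_last i1 with ⟨j1, rfl⟩ | rfl <;>
        rcases Fin.eq_castSucc_or_eq_last i2 with ⟨j2, rfl⟩ | rfl
      · rw [hcols j1, hcols j2] at hEq
        exact congrArg Fin.castSucc (hv'colinj hEq)
      · rw [hcols j1, hclast] at hEq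
        exact absurd (hEq ▸ Finset.mem_image.mpr ⟨j1, Finset.mem_univ _, rfl⟩) hcS
      · rw [hclast, hcols j2] at hEq
        exact absurd (hEq ▸ Finset.mem_image.mpr ⟨j2, Finset.mem_univ _, rfl⟩) hcS
      · rfl
    · refine Fin.lastCases ?_ ?_
      · rw [hclast]; exact hc𝒟
      · intro j; rw [hcols j]; exact hv'col j

end AuxLemmas

theorem stmt5 :
    ∀ α : ℝ, 0 < α → α ≤ 1 → ∃ ε₀ : ℝ, 0 < ε₀ ∧
    ∀ ε : ℝ, 0 < ε → ε ≤ ε₀ → ∃ n₀ : ℕ, ∀ n : ℕ, n₀ ≤ n →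
    ∀ (k : ℕ) (star : Fin k → Bool),
    ∀ (E : Finset (Fin n × Fin n)) (col : Fin n × Fin n → Fin n),
    EdgeColorPseudorandom n α ε E col →
    ∀ 𝒟 : Finset (Fin n), 𝒟 ⊆ E.image col → ((k : ℝ) + 1) * ε * n ≤ (𝒟.card : ℝ) →
    ∀ A : Fin (k + 1) → Finset (Fin n),
    (∀ i j, i ≠ j → Disjoint (A i) (A j)) →
    (∀ i, 2 * ε * n ≤ ((A i).card : ℝ)) →
    ∃ v : Fin (k + 1) → Fin n, (∀ i, v i ∈ A i) ∧
      IsRainbowPath E col star v ∧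
      ∀ i : Fin k, col (pathEdge v star i) ∈ 𝒟 := by
  intro α hα hα1
  refine ⟨1, one_pos, fun ε hε hε1 => ⟨⌈(ε ^ 2)⁻¹⌉₊, ?_⟩⟩
  intro n hn k star E col hpr 𝒟 hsub hcard A hdisj hA
  have hε2 : 0 < ε ^ 2 := by positivity
  have hεn : 1 ≤ ε ^ 2 * n := by
    have h1 : ((ε ^ 2)⁻¹ : ℝ) ≤ n := le_trans (Nat.le_ceil _) (by exact_mod_cast hn)
    have h2 : ε ^ 2 * (ε ^ 2)⁻¹ ≤ ε ^ 2 * n := by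
      exact mul_le_mul_of_nonneg_left h1 hε2.le
    rwa [mul_inv_cancel₀ hε2.ne'] at h2
  have h0 : 0 < ε * n := by nlinarith
  exact aux_path n ε hε hεn E col hpr.2.2.2.1 k star 𝒟 hsub hcard A hdisj
    (fun i => hA i.castSucc) (by linarith [hA (Fin.last k)])
end

section
/- Let 1/n ≪ ε ≪ ν ≪ α ≤ 1 (read right to left as a hierarchy of constants). Let D be an (n,α,ε)-edge-color pseudorandom digraph and let k < (1−ν−3ε)n. Then for every V′ ⊆ V(D) and C′ ⊆ [n] with |V′|,|C′| ≥ (1−ν)n and for every ⋆ ∈ {→,←}ᵏ, there exists a rainbow path in D of length k with orientation ⋆ whose vertices all lie in V′ and whose colors all lie in C′. -/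
open MeasureTheory Filter
open scoped ENNReal

section Stmt6Proof

private def sbf {k : ℕ} (star : Fin k → Bool) : ℕ → Bool :=
  fun i => if h : i < k then star ⟨i, h⟩ else true

private def pedge {n k : ℕ} (star : Fin k → Bool) (p : ℕ → Fin n) (i : ℕ) :
    Fin n × Fin n :=
  dirEdge (sbf star i) (p i) (p (i + 1))

private lemma pedge_update {n k : ℕ} (star : Fin k → Bool) (p : ℕ → Fin n) (s : ℕ)
    (w : Fin n) (i : ℕ) (hi : i + 1 < s) :
    pedge star (Function.update p s w) i = pedge star p i := by
  unfold pedge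
  rw [Function.update_of_ne (by omega), Function.update_of_ne (by omega)]

private lemma sbf_eq {k : ℕ} (star : Fin k → Bool) (i : Fin k) : sbf star i.val = star i := by
  simp [sbf, i.isLt]

private lemma pathEdge_eq {n k : ℕ} (star : Fin k → Bool) (p : ℕ → Fin n) (i : Fin k) :
    pathEdge (fun j : Fin (k + 1) => p j.val) star i = pedge star p i.val := by
  have hsb : sbf star i.val = star i := sbf_eq star i
  simp only [pathEdge, pedge, dirEdge, hsb, Fin.coe_castSucc, Fin.val_succ]

private lemma update_card_sum {γ : Type*} [DecidableEq γ] (D : Bool → Finset γ) (b : Bool)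
    (v : γ) (hv : v ∉ D b) :
    (Function.update D b (insert v (D b)) true).card
      + (Function.update D b (insert v (D b)) false).card
      = (D true).card + (D false).card + 1 := by
  cases b
  · rw [Function.update_self, Function.update_of_ne (by decide),
      Finset.card_insert_of_notMem hv]
    omega
  · rw [Function.update_self, Function.update_of_ne (by decide),
      Finset.card_insert_of_notMem hv]
    omega

private structure DInv {n k : ℕ} (E : Finset (Fin n × Fin n)) (col : Fin n × Fin n → Fin n)
    (V' C' : Finset (Fin n)) (star : Fin k → Bool) (m : ℕ)
    (s : ℕ) (p : ℕ → Fin n) (D : Bool → Finset (Fin n)) (B : Finset (Fin n)) : Prop where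
  hs : s ≤ k + 1
  hVmem : ∀ i, i < s → p i ∈ V'
  hinj : ∀ i j, i < j → j < s → p i ≠ p j
  hnd : ∀ i, i < s → ∀ b, p i ∉ D b
  hedge : ∀ i, i + 1 < s → pedge star p i ∈ E
  hcolC : ∀ i, i + 1 < s → col (pedge star p i) ∈ C'
  hcolB : ∀ i, i + 1 < s → col (pedge star p i) ∈ B
  hrb : ∀ i j, i < j → j + 1 < s → col (pedge star p i) ≠ col (pedge star p j)
  hBz : s = 0 → B.card ≤ (D true).card + (D false).card
  hBs : 1 ≤ s → B.card + 1 ≤ s + (D true).card + (D false).card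
  hDm : ∀ b, (D b).card + 1 ≤ m
  hcert : ∀ b, ∀ u ∈ D b, ∀ w ∈ V', (∀ i, i < s → w ≠ p i) → (∀ b', w ∉ D b') →
    dirEdge b u w ∈ E → col (dirEdge b u w) ∈ C' → col (dirEdge b u w) ∈ B

private lemma dinv_success {n k : ℕ} {E : Finset (Fin n × Fin n)} {col : Fin n × Fin n → Fin n}
    {V' C' : Finset (Fin n)} {star : Fin k → Bool} {m : ℕ} {p : ℕ → Fin n}
    {D : Bool → Finset (Fin n)} {B : Finset (Fin n)}
    (inv : DInv E col V' C' star m (k + 1) p D B) :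
    ∃ v : Fin (k + 1) → Fin n, IsRainbowPath E col star v ∧ (∀ i, v i ∈ V') ∧
      ∀ i : Fin k, col (pathEdge v star i) ∈ C' := by
  refine ⟨fun j => p j.val, ⟨?_, ?_, ?_⟩, fun i => inv.hVmem i.val i.isLt, fun i => ?_⟩
  · intro a b hab
    by_contra hne
    have hne' : a.val ≠ b.val := fun h => hne (Fin.ext h)
    rcases Nat.lt_or_ge a.val b.val with h | h
    · exact inv.hinj a.val b.val h b.isLt hab
    · exact inv.hinj b.val a.val (by omega) a.isLt hab.symm
  · intro i
    rw [pathEdge_eq]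
    exact inv.hedge i.val (by have := i.isLt; omega)
  · intro i j hij
    by_contra hne
    have hne' : i.val ≠ j.val := fun h => hne (Fin.ext h)
    simp only [pathEdge_eq] at hij
    rcases Nat.lt_or_ge i.val j.val with h | h
    · exact inv.hrb i.val j.val h (by have := j.isLt; omega) hij
    · exact inv.hrb j.val i.val (by omega) (by have := i.isLt; omega) hij.symm
  · rw [pathEdge_eq]
    exact inv.hcolC i.val (by have := i.isLt; omega)

private lemma dfs_run {n k : ℕ} (E : Finset (Fin n × Fin n)) (col : Fin n × Fin n → Fin n)
    (V' C' : Finset (Fin n)) (star : Fin k → Bool) (m : ℕ) (hm1 : 1 ≤ m)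
    (hcond : ∀ U W C₀ : Finset (Fin n), m ≤ U.card → m ≤ W.card → m ≤ C₀.card →
      ∀ b : Bool, ∃ u ∈ U, ∃ w ∈ W, dirEdge b u w ∈ E ∧ col (dirEdge b u w) ∈ C₀)
    (hVc : k + 3 * m ≤ V'.card + 2) (hCc : k + 3 * m ≤ C'.card + 2) :
    ∀ μ s p D B, DInv E col V' C' star m s p D B →
      (2 * m - ((D true).card + (D false).card)) * (n + 2) + (n + 1 - s) < μ →
      ∃ v : Fin (k + 1) → Fin n, IsRainbowPath E col star v ∧ (∀ i, v i ∈ V') ∧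
        ∀ i : Fin k, col (pathEdge v star i) ∈ C' := by
  have hV'n : V'.card ≤ n := by
    have := Finset.card_le_card (Finset.subset_univ V')
    simpa using this
  have hkn : k + 1 ≤ n := by omega
  intro μ
  induction μ with
  | zero => intro s p D B _ h; exact absurd h (Nat.not_lt_zero _)
  | succ μ ih =>
    intro s p D B inv hμ
    have hμ' : (2 * m - ((D true).card + (D false).card)) * (n + 2) + (n + 1 - s) ≤ μ :=
      Nat.lt_succ_iff.mp hμ
    by_cases hsk : s = k + 1
    · subst hsk; exact dinv_success inv
    have hsk' : s ≤ k := by have := inv.hs; omega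
    have hd2 : (D true).card + (D false).card + 2 ≤ 2 * m := by
      have h1 := inv.hDm true; have h2 := inv.hDm false; omega
    rcases Nat.eq_zero_or_pos s with hs0 | hs1
    · -- push a new root
      have hW0 : 0 < (V' \ (D true ∪ D false)).card := by
        have h := Finset.le_card_sdiff (D true ∪ D false) V'
        have h2 := Finset.card_union_le (D true) (D false)
        omega
      obtain ⟨w, hw⟩ := Finset.card_pos.mp hW0
      rw [Finset.mem_sdiff] at hw
      obtain ⟨hwV, hwD⟩ := hw
      have hwD' : ∀ b, w ∉ D b := by
        intro b hb
        apply hwD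
        cases b
        · exact Finset.mem_union_right _ hb
        · exact Finset.mem_union_left _ hb
      subst hs0
      have inv' : DInv E col V' C' star m 1 (Function.update p 0 w) D B := by
        refine ⟨by omega, ?_, ?_, ?_, ?_, ?_, ?_, ?_, ?_, ?_, inv.hDm, ?_⟩
        · intro i hi
          have : i = 0 := by omega
          subst this
          rw [Function.update_self]
          exact hwV
        · intro i j hij hj; omega
        · intro i hi b
          have : i = 0 := by omega
          subst this
          rw [Function.update_self]
          exact hwD' b
        · intro i hi; omega
        · intro i hi; omega
        · intro i hi; omega
        · intro i j hij hj; omega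
        · intro h; omega
        · intro _
          have := inv.hBz rfl
          omega
        · intro b u hu w' hw'V hw'p hw'D he hc
          exact inv.hcert b u hu w' hw'V (fun i hi => absurd hi (by omega)) hw'D he hc
      refine ih 1 (Function.update p 0 w) D B inv' ?_
      have hlt : n + 1 - 1 < n + 1 - 0 := by omega
      exact lt_of_lt_of_le
        (Nat.add_lt_add_left hlt ((2 * m - ((D true).card + (D false).card)) * (n + 2))) hμ'
    · -- stack is nonempty
      by_cases hpush : ∃ w, w ∈ V' ∧ (∀ i, i < s → w ≠ p i) ∧ (∀ b', w ∉ D b') ∧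
          dirEdge (sbf star (s - 1)) (p (s - 1)) w ∈ E ∧
          col (dirEdge (sbf star (s - 1)) (p (s - 1)) w) ∈ C' ∧
          col (dirEdge (sbf star (s - 1)) (p (s - 1)) w) ∉ B
      · -- push the child w
        obtain ⟨w, hwV, hwp, hwD, he, hcC, hcB⟩ := hpush
        have key : pedge star (Function.update p s w) (s - 1)
            = dirEdge (sbf star (s - 1)) (p (s - 1)) w := by
          unfold pedge
          rw [show s - 1 + 1 = s from by omega, Function.update_self,
            Function.update_of_ne (by omega)]
        have hup : ∀ i, i < s → Function.update p s w i = p i := by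
          intro i hi
          exact Function.update_of_ne (by omega) _ _
        have inv' : DInv E col V' C' star m (s + 1) (Function.update p s w) D
            (insert (col (dirEdge (sbf star (s - 1)) (p (s - 1)) w)) B) := by
          refine ⟨by omega, ?_, ?_, ?_, ?_, ?_, ?_, ?_, ?_, ?_, inv.hDm, ?_⟩
          · intro i hi
            rcases Nat.lt_or_ge i s with h | h
            · rw [hup i h]; exact inv.hVmem i h
            · have : i = s := by omega
              subst this
              rw [Function.update_self]; exact hwV
          · intro i j hij hj
            rcases Nat.lt_or_ge j s with h | h
            · rw [hup i (by omega), hup j h]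
              exact inv.hinj i j hij h
            · have : j = s := by omega
              subst this
              rw [hup i (by omega), Function.update_self]
              exact fun hh => hwp i (by omega) hh.symm
          · intro i hi b
            rcases Nat.lt_or_ge i s with h | h
            · rw [hup i h]; exact inv.hnd i h b
            · have : i = s := by omega
              subst this
              rw [Function.update_self]; exact hwD b
          · intro i hi
            rcases Nat.lt_or_ge (i + 1) s with h | h
            · rw [pedge_update star p s w i h]
              exact inv.hedge i h
            · have : i = s - 1 := by omega
              subst this
              rw [key]; exact he
          · intro i hi
            rcases Nat.lt_or_ge (i + 1) s with h | h
            · rw [pedge_update star p s w i h]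
              exact inv.hcolC i h
            · have : i = s - 1 := by omega
              subst this
              rw [key]; exact hcC
          · intro i hi
            rcases Nat.lt_or_ge (i + 1) s with h | h
            · rw [pedge_update star p s w i h]
              exact Finset.mem_insert_of_mem (inv.hcolB i h)
            · have : i = s - 1 := by omega
              subst this
              rw [key]; exact Finset.mem_insert_self _ _
          · intro i j hij hj
            rcases Nat.lt_or_ge (j + 1) s with h | h
            · rw [pedge_update star p s w i (by omega), pedge_update star p s w j h]
              exact inv.hrb i j hij h
            · have : j = s - 1 := by omega
              subst this
              rw [pedge_update star p s w i (by omega), key]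
              intro heq
              exact hcB (heq ▸ inv.hcolB i (by omega))
          · intro h; omega
          · intro _
            have h1 := inv.hBs hs1
            have h2 := Finset.card_insert_le (col (dirEdge (sbf star (s - 1)) (p (s - 1)) w)) B
            omega
          · intro b u hu w' hw'V hw'p hw'D he' hc'
            refine Finset.mem_insert_of_mem ?_
            refine inv.hcert b u hu w' hw'V ?_ hw'D he' hc'
            intro i hi
            have := hw'p i (by omega)
            rwa [hup i hi] at this
        refine ih (s + 1) (Function.update p s w) D
          (insert (col (dirEdge (sbf star (s - 1)) (p (s - 1)) w)) B) inv' ?_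
        have hlt : n + 1 - (s + 1) < n + 1 - s := by omega
        exact lt_of_lt_of_le
          (Nat.add_lt_add_left hlt ((2 * m - ((D true).card + (D false).card)) * (n + 2))) hμ'
      · -- the top of the stack is stuck
        have hvD : ∀ b, p (s - 1) ∉ D b := inv.hnd (s - 1) (by omega)
        by_cases hroom : (D (sbf star (s - 1))).card + 2 ≤ m
        · -- pop : kill the top of the stack
          set bb := sbf star (s - 1) with hbb
          have hsum := update_card_sum D bb (p (s - 1)) (hvD bb)
          have hD'sub : ∀ b', D b' ⊆ Function.update D bb (insert (p (s - 1)) (D bb)) b' := by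
            intro b'
            by_cases h : b' = bb
            · subst h
              rw [Function.update_self]
              exact Finset.subset_insert _ _
            · rw [Function.update_of_ne h]
          have hvmem : p (s - 1) ∈ Function.update D bb (insert (p (s - 1)) (D bb)) bb := by
            rw [Function.update_self]
            exact Finset.mem_insert_self _ _
          have inv' : DInv E col V' C' star m (s - 1) p
              (Function.update D bb (insert (p (s - 1)) (D bb))) B := by
            refine ⟨by omega, ?_, ?_, ?_, ?_, ?_, ?_, ?_, ?_, ?_, ?_, ?_⟩
            · intro i hi; exact inv.hVmem i (by omega)
            · intro i j hij hj; exact inv.hinj i j hij (by omega)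
            · intro i hi b'
              by_cases h : b' = bb
              · subst h
                rw [Function.update_self, Finset.mem_insert]
                push_neg
                exact ⟨inv.hinj i (s - 1) (by omega) (by omega), inv.hnd i (by omega) bb⟩
              · rw [Function.update_of_ne h]
                exact inv.hnd i (by omega) b'
            · intro i hi; exact inv.hedge i (by omega)
            · intro i hi; exact inv.hcolC i (by omega)
            · intro i hi; exact inv.hcolB i (by omega)
            · intro i j hij hj; exact inv.hrb i j hij (by omega)
            · intro h
              have h1 := inv.hBs hs1
              omega
            · intro h
              have h1 := inv.hBs hs1
              omega
            · intro b'
              by_cases h : b' = bb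
              · subst h
                rw [Function.update_self, Finset.card_insert_of_notMem (hvD bb)]
                omega
              · rw [Function.update_of_ne h]
                exact inv.hDm b'
            · intro b' u hu w hwV hwp hwD' he hc
              have hwD : ∀ b'', w ∉ D b'' := fun b'' hmem => hwD' b'' (hD'sub b'' hmem)
              have hwv : w ≠ p (s - 1) := by
                intro heq
                exact hwD' bb (heq ▸ hvmem)
              have hwps : ∀ i, i < s → w ≠ p i := by
                intro i hi
                rcases Nat.lt_or_ge i (s - 1) with h' | h'
                · exact hwp i h'
                · have : i = s - 1 := by omega
                  subst this
                  exact hwv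
              by_cases h : b' = bb
              · subst h
                rw [Function.update_self] at hu
                rcases Finset.mem_insert.mp hu with hu' | hu'
                · subst hu'
                  by_contra hnB
                  exact hpush ⟨w, hwV, hwps, hwD, he, hc, hnB⟩
                · exact inv.hcert bb u hu' w hwV hwps hwD he hc
              · rw [Function.update_of_ne h] at hu
                exact inv.hcert b' u hu w hwV hwps hwD he hc
          refine ih (s - 1) p (Function.update D bb (insert (p (s - 1)) (D bb))) B inv' ?_
          rw [hsum]
          have h1 : 2 * m - ((D true).card + (D false).card + 1)
              = 2 * m - ((D true).card + (D false).card) - 1 := by omega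
          rw [h1, Nat.sub_one_mul]
          have h2 : n + 2 ≤ (2 * m - ((D true).card + (D false).card)) * (n + 2) := by
            have h3 : 1 ≤ 2 * m - ((D true).card + (D false).card) := by omega
            calc n + 2 = 1 * (n + 2) := (one_mul _).symm
            _ ≤ (2 * m - ((D true).card + (D false).card)) * (n + 2) :=
              Nat.mul_le_mul_right _ h3
          generalize hA : (2 * m - ((D true).card + (D false).card)) * (n + 2) = A at h2 hμ'
          omega
        · -- the death budget is exhausted: contradiction with the expansion property
          exfalso
          have hDbm : (D (sbf star (s - 1))).card + 1 = m := by
            have := inv.hDm (sbf star (s - 1))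
            omega
          have hU : m ≤ (insert (p (s - 1)) (D (sbf star (s - 1)))).card := by
            rw [Finset.card_insert_of_notMem (hvD _)]
            omega
          have hXcard : ((Finset.range s).image p ∪ (D true ∪ D false)).card
              ≤ s + ((D true).card + (D false).card) := by
            have h1 := Finset.card_union_le ((Finset.range s).image p) (D true ∪ D false)
            have h2 := Finset.card_union_le (D true) (D false)
            have h3 : ((Finset.range s).image p).card ≤ s := by
              have := Finset.card_image_le (s := Finset.range s) (f := p)
              simpa using this
            omega
          have hW : m ≤ (V' \ ((Finset.range s).image p ∪ (D true ∪ D false))).card := by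
            have h := Finset.le_card_sdiff ((Finset.range s).image p ∪ (D true ∪ D false)) V'
            omega
          have hC₀ : m ≤ (C' \ B).card := by
            have h := Finset.le_card_sdiff B C'
            have hB := inv.hBs hs1
            omega
          obtain ⟨u, hu, w, hw, he, hc⟩ :=
            hcond (insert (p (s - 1)) (D (sbf star (s - 1))))
              (V' \ ((Finset.range s).image p ∪ (D true ∪ D false)))
              (C' \ B) hU hW hC₀ (sbf star (s - 1))
          rw [Finset.mem_sdiff] at hw
          obtain ⟨hwV, hwX⟩ := hw
          have hwp : ∀ i, i < s → w ≠ p i := by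
            intro i hi heq
            exact hwX (Finset.mem_union_left _
              (Finset.mem_image.mpr ⟨i, Finset.mem_range.mpr hi, heq.symm⟩))
          have hwD : ∀ b', w ∉ D b' := by
            intro b' hmem
            apply hwX
            apply Finset.mem_union_right
            cases b'
            · exact Finset.mem_union_right _ hmem
            · exact Finset.mem_union_left _ hmem
          rw [Finset.mem_sdiff] at hc
          obtain ⟨hcC, hcB⟩ := hc
          rcases Finset.mem_insert.mp hu with hu' | hu'
          · subst hu'
            exact hpush ⟨w, hwV, hwp, hwD, he, hcC, hcB⟩
          · exact hcB (inv.hcert _ u hu' w hwV hwp hwD he hcC)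

end Stmt6Proof

theorem stmt6 :
    ∀ α : ℝ, 0 < α → α ≤ 1 → ∃ ν₀ : ℝ, 0 < ν₀ ∧
    ∀ ν : ℝ, 0 < ν → ν ≤ ν₀ → ∃ ε₀ : ℝ, 0 < ε₀ ∧
    ∀ ε : ℝ, 0 < ε → ε ≤ ε₀ → ∃ n₀ : ℕ, ∀ n : ℕ, n₀ ≤ n →
    ∀ (E : Finset (Fin n × Fin n)) (col : Fin n × Fin n → Fin n),
    EdgeColorPseudorandom n α ε E col →
    ∀ k : ℕ, (k : ℝ) < (1 - ν - 3 * ε) * n →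
    ∀ V' C' : Finset (Fin n),
    (1 - ν) * n ≤ (V'.card : ℝ) → (1 - ν) * n ≤ (C'.card : ℝ) →
    ∀ star : Fin k → Bool,
    ∃ v : Fin (k + 1) → Fin n, IsRainbowPath E col star v ∧
      (∀ i, v i ∈ V') ∧ (∀ i : Fin k, col (pathEdge v star i) ∈ C') := by
  intro α hα hα1
  refine ⟨1, one_pos, ?_⟩
  intro ν hν hν1
  refine ⟨1, one_pos, ?_⟩
  intro ε hε hε1
  refine ⟨1, ?_⟩
  intro n hn E col hpr k hk V' C' hV' hC' star
  obtain ⟨-, himg, -, hcond2, -⟩ := hpr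
  have hn0 : (0 : ℝ) < n := by
    have : (1 : ℕ) ≤ n := hn
    exact_mod_cast this
  have hεn : 0 < ε * (n : ℝ) := mul_pos hε hn0
  set m : ℕ := ⌈ε * (n : ℝ)⌉₊ with hmdef
  have hm1 : 1 ≤ m := Nat.ceil_pos.mpr hεn
  have hmlow : ε * (n : ℝ) ≤ m := Nat.le_ceil _
  have hmup : (m : ℝ) < ε * (n : ℝ) + 1 := Nat.ceil_lt_add_one hεn.le
  have hVc : k + 3 * m ≤ V'.card + 2 := by
    have h2 : (k : ℝ) + 3 * (m : ℝ) < (V'.card : ℝ) + 3 := by nlinarith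
    have h3 : ((k + 3 * m : ℕ) : ℝ) < ((V'.card + 3 : ℕ) : ℝ) := by push_cast; linarith
    have h4 : k + 3 * m < V'.card + 3 := by exact_mod_cast h3
    omega
  have hCc : k + 3 * m ≤ C'.card + 2 := by
    have h2 : (k : ℝ) + 3 * (m : ℝ) < (C'.card : ℝ) + 3 := by nlinarith
    have h3 : ((k + 3 * m : ℕ) : ℝ) < ((C'.card + 3 : ℕ) : ℝ) := by push_cast; linarith
    have h4 : k + 3 * m < C'.card + 3 := by exact_mod_cast h3
    omega
  have hcondm : ∀ U W C₀ : Finset (Fin n), m ≤ U.card → m ≤ W.card → m ≤ C₀.card →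
      ∀ b : Bool, ∃ u ∈ U, ∃ w ∈ W, dirEdge b u w ∈ E ∧ col (dirEdge b u w) ∈ C₀ := by
    intro U W C₀ hU hW hC₀ b
    refine hcond2 U W C₀ ?_ ?_ ?_ ?_ b
    · rw [himg]; exact Finset.subset_univ _
    · exact le_trans hmlow (by exact_mod_cast hU)
    · exact le_trans hmlow (by exact_mod_cast hW)
    · exact le_trans hmlow (by exact_mod_cast hC₀)
  have inv0 : DInv E col V' C' star m 0 (fun _ => (⟨0, hn⟩ : Fin n))
      (fun _ => (∅ : Finset (Fin n))) (∅ : Finset (Fin n)) := by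
    refine ⟨by omega, ?_, ?_, ?_, ?_, ?_, ?_, ?_, ?_, ?_, ?_, ?_⟩
    · intro i hi; omega
    · intro i j hij hj; omega
    · intro i hi b; omega
    · intro i hi; omega
    · intro i hi; omega
    · intro i hi; omega
    · intro i j hij hj; omega
    · intro _; simp
    · intro h; omega
    · intro b; simpa using hm1
    · intro b u hu
      exact absurd hu (Finset.notMem_empty u)
  refine dfs_run E col V' C' star m hm1 hcondm hVc hCc (2 * m * (n + 2) + (n + 2)) 0
    (fun _ => (⟨0, hn⟩ : Fin n)) (fun _ => ∅) ∅ inv0 ?_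
  have heq : (2 * m - ((∅ : Finset (Fin n)).card + (∅ : Finset (Fin n)).card)) * (n + 2)
      + (n + 1 - 0) = 2 * m * (n + 2) + (n + 1) := by simp
  rw [heq]
  exact Nat.add_lt_add_left (by omega) _
end

section
/- Let 1/n ≪ ε ≪ ν ≪ α ≤ 1 (read right to left as a hierarchy of constants). Let D be an (n,α,ε)-edge-color pseudorandom digraph and let ⋆ ∈ {→,←}². Then for every V′ ⊆ V(D) and C′ ⊆ C(D) with |V′|,|C′| ≥ (1−ν)n, there exist 40 distinct vertices v₁,…,v₄₀ ∈ V′ and 80 distinct colors c₁,…,c₄₀,d₁,…,d₄₀ ∈ C′ such that D contains an (S,⋆)-absorber with S = {{v_i,c_i,d_i} : i ∈ [40]} whose internal vertices lie in V′ and whose internal colors lie in C′. -/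
open MeasureTheory Filter
open scoped ENNReal

section Stmt11Aux
open Finset
open scoped Classical

variable {n : ℕ}

/-- The endpoint of an edge that matters for direction `b`. -/
def myEnd (b : Bool) (e : Fin n × Fin n) : Fin n := if b then e.1 else e.2

/-- The other endpoint. -/
def otherEnd (b : Bool) (e : Fin n × Fin n) : Fin n := if b then e.2 else e.1

lemma dirEdge_reconstruct {b : Bool} {u : Fin n} {e : Fin n × Fin n} (h : myEnd b e = u) :
    dirEdge b u (otherEnd b e) = e := by
  cases b <;> simp [myEnd] at h <;> simp [dirEdge, otherEnd, ← h]

lemma myEnd_dirEdge (b : Bool) (u w : Fin n) : myEnd b (dirEdge b u w) = u := by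
  cases b <;> simp [myEnd, dirEdge]

lemma otherEnd_dirEdge (b : Bool) (u w : Fin n) : otherEnd b (dirEdge b u w) = w := by
  cases b <;> simp [otherEnd, dirEdge]

lemma myEnd_not_dirEdge (b : Bool) (u w : Fin n) : myEnd (!b) (dirEdge b u w) = w := by
  cases b <;> simp [myEnd, dirEdge]

lemma dirEdge_left_injective (b : Bool) (u : Fin n) :
    Function.Injective (fun z => dirEdge b u z) := by
  intro a c h
  have := congrArg (otherEnd b) h
  simpa [otherEnd_dirEdge] using this

lemma dirEdge_right_injective (b : Bool) (u : Fin n) :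
    Function.Injective (fun z => dirEdge b z u) := by
  intro a c h
  cases b <;> simpa [dirEdge, Prod.ext_iff] using h

lemma ne_of_dirEdge_mem {E : Finset (Fin n × Fin n)} (hl : Loopless E) {b : Bool}
    {u w : Fin n} (h : dirEdge b u w ∈ E) : u ≠ w := by
  have := hl _ h
  cases b <;> simp [dirEdge] at this
  · exact fun hh => this hh.symm
  · exact this

lemma mem_endpoints_dirEdge (b : Bool) (u w a : Fin n) :
    (a = (dirEdge b u w).1 ∨ a = (dirEdge b u w).2) ↔ (a = u ∨ a = w) := by
  cases b <;> simp [dirEdge] <;> tauto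

end Stmt11Aux
section Stmt11Aux2
open Finset
open scoped Classical

variable {n : ℕ}

lemma card_inter_ge (A B : Finset (Fin n)) :
    (A.card : ℝ) - ((Finset.univ \ B).card : ℝ) ≤ ((A ∩ B).card : ℝ) := by
  have hsub : A ⊆ (A ∩ B) ∪ (Finset.univ \ B) := by
    intro a ha
    by_cases hb : a ∈ B
    · exact Finset.mem_union.mpr (Or.inl (Finset.mem_inter.mpr ⟨ha, hb⟩))
    · exact Finset.mem_union.mpr (Or.inr (by simp [hb]))
  have := (Finset.card_le_card hsub).trans (Finset.card_union_le _ _)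
  have := Nat.cast_le (α := ℝ) |>.mpr this
  push_cast at this
  linarith

lemma card_sdiff_ge' (A B : Finset (Fin n)) :
    (A.card : ℝ) - (B.card : ℝ) ≤ ((A \ B).card : ℝ) := by
  have hsub : A ⊆ (A \ B) ∪ B := by
    intro a ha
    by_cases hb : a ∈ B
    · exact Finset.mem_union.mpr (Or.inr hb)
    · exact Finset.mem_union.mpr (Or.inl (by simp [ha, hb]))
  have := (Finset.card_le_card hsub).trans (Finset.card_union_le _ _)
  have := Nat.cast_le (α := ℝ) |>.mpr this
  push_cast at this
  linarith

/-- Key counting lemma: the number of good continuations from `u` in direction `b`. -/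
lemma step_count (E : Finset (Fin n × Fin n)) (col : Fin n × Fin n → Fin n)
    (b : Bool) (u : Fin n) (C' V' Ac Av : Finset (Fin n)) (K : ℝ)
    (hdeg : K ≤ (((E.filter fun e => myEnd b e = u).image col).card : ℝ)) :
    K - ((Finset.univ \ C').card : ℝ) - (Ac.card : ℝ)
      - ((Finset.univ \ V').card : ℝ) - (Av.card : ℝ) ≤
      ((Finset.univ.filter fun z => dirEdge b u z ∈ E ∧ col (dirEdge b u z) ∈ C' ∧
        col (dirEdge b u z) ∉ Ac ∧ z ∈ V' ∧ z ∉ Av).card : ℝ) := by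
  classical
  set F : Finset (Fin n × Fin n) := E.filter fun e => myEnd b e = u ∧ col e ∈ C' ∧
    col e ∉ Ac ∧ otherEnd b e ∈ V' ∧ otherEnd b e ∉ Av with hF
  set F₁ : Finset (Fin n × Fin n) := E.filter fun e => myEnd b e = u ∧ col e ∈ C' ∧
    col e ∉ Ac with hF₁
  set F₀ : Finset (Fin n × Fin n) := E.filter fun e => myEnd b e = u with hF₀
  -- otherEnd is injective on anything anchored at u
  have hinj : ∀ e₁ ∈ F₀, ∀ e₂ ∈ F₀, otherEnd b e₁ = otherEnd b e₂ → e₁ = e₂ := by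
    intro e₁ h₁ e₂ h₂ h
    have hu₁ : myEnd b e₁ = u := (Finset.mem_filter.mp h₁).2
    have hu₂ : myEnd b e₂ = u := (Finset.mem_filter.mp h₂).2
    rw [← dirEdge_reconstruct hu₁, ← dirEdge_reconstruct hu₂, h]
  have hFsub₀ : F ⊆ F₀ := by
    intro e he; rw [hF₀, Finset.mem_filter]
    exact ⟨(Finset.mem_filter.mp he).1, (Finset.mem_filter.mp he).2.1⟩
  have hF₁sub₀ : F₁ ⊆ F₀ := by
    intro e he; rw [hF₀, Finset.mem_filter]
    exact ⟨(Finset.mem_filter.mp he).1, (Finset.mem_filter.mp he).2.1⟩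
  -- (1) image of otherEnd over F lands in the target
  have h1 : F.image (otherEnd b) ⊆ (Finset.univ.filter fun z => dirEdge b u z ∈ E ∧
      col (dirEdge b u z) ∈ C' ∧ col (dirEdge b u z) ∉ Ac ∧ z ∈ V' ∧ z ∉ Av) := by
    intro z hz
    obtain ⟨e, he, rfl⟩ := Finset.mem_image.mp hz
    obtain ⟨heE, hu, hc, hcn, hv, hvn⟩ := Finset.mem_filter.mp he
    have hrec : dirEdge b u (otherEnd b e) = e := dirEdge_reconstruct hu
    rw [Finset.mem_filter, hrec]
    exact ⟨Finset.mem_univ _, heE, hc, hcn, hv, hvn⟩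
  -- (2) card of image = card F
  have h2 : (F.image (otherEnd b)).card = F.card :=
    Finset.card_image_of_injOn fun e₁ h₁ e₂ h₂ h => hinj e₁ (hFsub₀ h₁) e₂ (hFsub₀ h₂) h
  -- (3)
  have h3 : (F.image col).card ≤ F.card := Finset.card_image_le
  -- (4)  F₁.image col ⊆ F.image col ∪ (F₁ \ F).image col
  have h4 : F₁.image col ⊆ F.image col ∪ (F₁ \ F).image col := by
    intro c hc
    obtain ⟨e, he, rfl⟩ := Finset.mem_image.mp hc
    by_cases heF : e ∈ F
    · exact Finset.mem_union.mpr (Or.inl (Finset.mem_image_of_mem _ heF))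
    · exact Finset.mem_union.mpr (Or.inr (Finset.mem_image_of_mem _
        (Finset.mem_sdiff.mpr ⟨he, heF⟩)))
  have h4' : (F₁.image col).card ≤ (F.image col).card + (F₁ \ F).card :=
    (Finset.card_le_card h4).trans ((Finset.card_union_le _ _).trans
      (by gcongr; exact Finset.card_image_le))
  -- (5)  |F₁ \ F| ≤ |univ \ V'| + |Av|
  have h5 : (F₁ \ F).card ≤ (Finset.univ \ V').card + Av.card := by
    have himg : (F₁ \ F).image (otherEnd b) ⊆ (Finset.univ \ V') ∪ Av := by
      intro z hz
      obtain ⟨e, he, rfl⟩ := Finset.mem_image.mp hz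
      obtain ⟨he₁, heF⟩ := Finset.mem_sdiff.mp he
      obtain ⟨heE, hu, hc, hcn⟩ := Finset.mem_filter.mp he₁
      by_cases hv : otherEnd b e ∈ V'
      · by_cases hvn : otherEnd b e ∈ Av
        · exact Finset.mem_union.mpr (Or.inr hvn)
        · exact absurd (Finset.mem_filter.mpr ⟨heE, hu, hc, hcn, hv, hvn⟩) heF
      · exact Finset.mem_union.mpr (Or.inl (by simp [hv]))
    have hcardimg : ((F₁ \ F).image (otherEnd b)).card = (F₁ \ F).card :=
      Finset.card_image_of_injOn fun e₁ h₁ e₂ h₂ h =>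
        hinj e₁ (hF₁sub₀ (Finset.mem_sdiff.mp h₁).1) e₂ (hF₁sub₀ (Finset.mem_sdiff.mp h₂).1) h
    calc (F₁ \ F).card = ((F₁ \ F).image (otherEnd b)).card := hcardimg.symm
      _ ≤ ((Finset.univ \ V') ∪ Av).card := Finset.card_le_card himg
      _ ≤ (Finset.univ \ V').card + Av.card := Finset.card_union_le _ _
  -- (6)  F₁.image col = ((F₀.image col) ∩ C') \ Ac
  have h6 : F₁.image col = ((F₀.image col) ∩ C') \ Ac := by
    ext c
    simp only [Finset.mem_image, Finset.mem_sdiff, Finset.mem_inter, hF₁, hF₀,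
      Finset.mem_filter]
    constructor
    · rintro ⟨e, ⟨heE, hu, hc, hcn⟩, rfl⟩
      exact ⟨⟨⟨e, ⟨heE, hu⟩, rfl⟩, hc⟩, hcn⟩
    · rintro ⟨⟨⟨e, ⟨heE, hu⟩, rfl⟩, hc⟩, hcn⟩
      exact ⟨e, ⟨heE, hu, hc, hcn⟩, rfl⟩
  -- (7) real bound for F₁.image col
  have h7 : K - ((Finset.univ \ C').card : ℝ) - (Ac.card : ℝ) ≤ ((F₁.image col).card : ℝ) := by
    rw [h6]
    have i1 := card_inter_ge (F₀.image col) C'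
    have i2 := card_sdiff_ge' ((F₀.image col) ∩ C') Ac
    linarith
  -- final chain
  have hfin := Finset.card_le_card h1
  have := Nat.cast_le (α := ℝ) |>.mpr hfin
  have h2' := congrArg (Nat.cast (R := ℝ)) h2
  have h4'' := Nat.cast_le (α := ℝ) |>.mpr h4'
  have h5' := Nat.cast_le (α := ℝ) |>.mpr h5
  have h3' := Nat.cast_le (α := ℝ) |>.mpr h3
  push_cast at this h2' h4'' h5' h3'
  linarith

end Stmt11Aux2
section Stmt11Aux3
open Finset
open scoped Classical

variable {n : ℕ}

lemma fiber_left (E : Finset (Fin n × Fin n)) (col : Fin n × Fin n → Fin n)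
    (b : Bool) (u : Fin n) (c : Fin n) (Z : Finset (Fin n))
    (hZ : ∀ z ∈ Z, dirEdge b u z ∈ E) :
    (Z.filter fun z => col (dirEdge b u z) = c).card ≤
      (E.filter fun e => col e = c ∧ myEnd b e = u).card := by
  apply Finset.card_le_card_of_injOn (fun z => dirEdge b u z)
  · intro z hz
    obtain ⟨hzZ, hzc⟩ := Finset.mem_filter.mp hz
    exact Finset.mem_filter.mpr ⟨hZ z hzZ, hzc, myEnd_dirEdge b u z⟩
  · exact fun a _ b' _ h => dirEdge_left_injective _ _ h

lemma fiber_right (E : Finset (Fin n × Fin n)) (col : Fin n × Fin n → Fin n)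
    (b : Bool) (u : Fin n) (c : Fin n) (Z : Finset (Fin n))
    (hZ : ∀ z ∈ Z, dirEdge b z u ∈ E) :
    (Z.filter fun z => col (dirEdge b z u) = c).card ≤
      (E.filter fun e => col e = c ∧ myEnd (!b) e = u).card := by
  apply Finset.card_le_card_of_injOn (fun z => dirEdge b z u)
  · intro z hz
    obtain ⟨hzZ, hzc⟩ := Finset.mem_filter.mp hz
    exact Finset.mem_filter.mpr ⟨hZ z hzZ, hzc, myEnd_not_dirEdge b z u⟩
  · exact fun a _ b' _ h => dirEdge_right_injective _ _ h

/-- Greedy selection of `m` elements with all colors distinct. -/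
lemma greedy (Z : Finset (Fin n)) (γ δ : Fin n → Fin n)
    (hne : ∀ z ∈ Z, γ z ≠ δ z) (B : ℝ) (hB : 0 ≤ B)
    (hγ : ∀ c : Fin n, ((Z.filter fun z => γ z = c).card : ℝ) ≤ B)
    (hδ : ∀ c : Fin n, ((Z.filter fun z => δ z = c).card : ℝ) ≤ B)
    (m : ℕ) (hcard : (m : ℝ) * (4 * B + 1) < (Z.card : ℝ)) :
    ∃ x : Fin m → Fin n, (∀ i, x i ∈ Z) ∧ Function.Injective x ∧
      Function.Injective (fun i => γ (x i)) ∧ Function.Injective (fun i => δ (x i)) ∧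
      (∀ i j, γ (x i) ≠ δ (x j)) := by
  classical
  induction m with
  | zero =>
    exact ⟨fun i => i.elim0, fun i => i.elim0, fun i => i.elim0,
      fun i => i.elim0, fun i => i.elim0, fun i => i.elim0⟩
  | succ m ih =>
    have hm : (m : ℝ) * (4 * B + 1) < (Z.card : ℝ) := by
      have : (m : ℝ) ≤ (m + 1 : ℕ) := by push_cast; linarith
      nlinarith
    obtain ⟨x, hxZ, hxinj, hγinj, hδinj, hγδ⟩ := ih hm
    -- bad set
    set Bad : Finset (Fin n) := Z.filter (fun z => ∃ i : Fin m, x i = z ∨ γ z = γ (x i) ∨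
      γ z = δ (x i) ∨ δ z = γ (x i) ∨ δ z = δ (x i)) with hBad
    have hBadsub : Bad ⊆ Finset.univ.biUnion (fun i : Fin m =>
        {x i} ∪ (Z.filter fun z => γ z = γ (x i)) ∪ (Z.filter fun z => γ z = δ (x i))
        ∪ (Z.filter fun z => δ z = γ (x i)) ∪ (Z.filter fun z => δ z = δ (x i))) := by
      intro z hz
      obtain ⟨hzZ, i, hi⟩ := Finset.mem_filter.mp hz
      apply Finset.mem_biUnion.mpr ⟨i, Finset.mem_univ _, ?_⟩
      simp only [Finset.mem_union, Finset.mem_singleton, Finset.mem_filter]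
      rcases hi with h | h | h | h | h
      · exact Or.inl (Or.inl (Or.inl (Or.inl h.symm)))
      · exact Or.inl (Or.inl (Or.inl (Or.inr ⟨hzZ, h⟩)))
      · exact Or.inl (Or.inl (Or.inr ⟨hzZ, h⟩))
      · exact Or.inl (Or.inr ⟨hzZ, h⟩)
      · exact Or.inr ⟨hzZ, h⟩
    have hBadcard : (Bad.card : ℝ) ≤ (m : ℝ) * (4 * B + 1) := by
      have h1 := (Finset.card_le_card hBadsub).trans (Finset.card_biUnion_le)
      have h2 : ∀ i : Fin m, ((({x i} ∪ (Z.filter fun z => γ z = γ (x i))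
          ∪ (Z.filter fun z => γ z = δ (x i)) ∪ (Z.filter fun z => δ z = γ (x i))
          ∪ (Z.filter fun z => δ z = δ (x i))).card : ℝ)) ≤ 4 * B + 1 := by
        intro i
        have c1 := hγ (γ (x i)); have c2 := hγ (δ (x i))
        have c3 := hδ (γ (x i)); have c4 := hδ (δ (x i))
        have u1 := Finset.card_union_le ({x i} ∪ (Z.filter fun z => γ z = γ (x i))
          ∪ (Z.filter fun z => γ z = δ (x i)) ∪ (Z.filter fun z => δ z = γ (x i)))
          (Z.filter fun z => δ z = δ (x i))
        have u2 := Finset.card_union_le ({x i} ∪ (Z.filter fun z => γ z = γ (x i))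
          ∪ (Z.filter fun z => γ z = δ (x i))) (Z.filter fun z => δ z = γ (x i))
        have u3 := Finset.card_union_le ({x i} ∪ (Z.filter fun z => γ z = γ (x i)))
          (Z.filter fun z => γ z = δ (x i))
        have u4 := Finset.card_union_le ({x i} : Finset (Fin n))
          (Z.filter fun z => γ z = γ (x i))
        have := Finset.card_singleton (x i)
        have cast1 := Nat.cast_le (α := ℝ) |>.mpr u1
        have cast2 := Nat.cast_le (α := ℝ) |>.mpr u2
        have cast3 := Nat.cast_le (α := ℝ) |>.mpr u3
        have cast4 := Nat.cast_le (α := ℝ) |>.mpr u4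
        push_cast at cast1 cast2 cast3 cast4
        simp only [Finset.card_singleton] at cast4
        push_cast at cast4
        linarith
      have hsum : ((Finset.univ.sum (fun i : Fin m => (({x i} ∪ (Z.filter fun z => γ z = γ (x i))
          ∪ (Z.filter fun z => γ z = δ (x i)) ∪ (Z.filter fun z => δ z = γ (x i))
          ∪ (Z.filter fun z => δ z = δ (x i))).card)) : ℕ) : ℝ) ≤ (m : ℝ) * (4 * B + 1) := by
        push_cast
        calc (Finset.univ.sum fun i : Fin m => ((({x i} ∪ (Z.filter fun z => γ z = γ (x i))
            ∪ (Z.filter fun z => γ z = δ (x i)) ∪ (Z.filter fun z => δ z = γ (x i))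
            ∪ (Z.filter fun z => δ z = δ (x i))).card : ℝ)))
            ≤ Finset.univ.sum fun _ : Fin m => (4 * B + 1) :=
              Finset.sum_le_sum fun i _ => h2 i
          _ = (m : ℝ) * (4 * B + 1) := by
              rw [Finset.sum_const, Finset.card_univ, Fintype.card_fin, nsmul_eq_mul]
      calc (Bad.card : ℝ) ≤ _ := Nat.cast_le (α := ℝ) |>.mpr h1
        _ ≤ (m : ℝ) * (4 * B + 1) := hsum
    -- find a fresh element
    have hlt : Bad.card < Z.card := by
      have : (Bad.card : ℝ) < (Z.card : ℝ) := lt_of_le_of_lt hBadcard hm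
      exact_mod_cast this
    have hBadZ : Bad ⊆ Z := Finset.filter_subset _ _
    obtain ⟨z, hzZ, hzBad⟩ : ∃ z ∈ Z, z ∉ Bad := by
      by_contra h
      push_neg at h
      exact absurd (Finset.card_le_card h) (not_le.mpr hlt)
    have hzgood : ∀ i : Fin m, x i ≠ z ∧ γ z ≠ γ (x i) ∧ γ z ≠ δ (x i) ∧
        δ z ≠ γ (x i) ∧ δ z ≠ δ (x i) := by
      intro i
      by_contra h
      push_neg at h
      apply hzBad
      rw [hBad, Finset.mem_filter]
      refine ⟨hzZ, i, ?_⟩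
      by_cases h1 : x i = z
      · exact Or.inl h1
      · by_cases hh : γ z = γ (x i)
        · exact Or.inr (Or.inl hh)
        · by_cases hh2 : γ z = δ (x i)
          · exact Or.inr (Or.inr (Or.inl hh2))
          · by_cases hh3 : δ z = γ (x i)
            · exact Or.inr (Or.inr (Or.inr (Or.inl hh3)))
            · exact Or.inr (Or.inr (Or.inr (Or.inr (by tauto))))
    -- extend
    refine ⟨Fin.cons z x, ?_, ?_, ?_, ?_, ?_⟩
    · intro i
      induction i using Fin.cases with
      | zero => simpa using hzZ
      | succ i => simpa using hxZ i
    · intro a b hab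
      induction a using Fin.cases with
      | zero =>
        induction b using Fin.cases with
        | zero => rfl
        | succ b =>
          simp only [Fin.cons_zero, Fin.cons_succ] at hab
          exact absurd hab.symm (hzgood b).1
      | succ a =>
        induction b using Fin.cases with
        | zero =>
          simp only [Fin.cons_zero, Fin.cons_succ] at hab
          exact absurd hab (hzgood a).1
        | succ b =>
          simp only [Fin.cons_succ] at hab
          exact congrArg Fin.succ (hxinj hab)
    · intro a b hab
      induction a using Fin.cases with
      | zero =>
        induction b using Fin.cases with
        | zero => rfl
        | succ b =>
          simp only [Fin.cons_zero, Fin.cons_succ] at hab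
          exact absurd hab (hzgood b).2.1
      | succ a =>
        induction b using Fin.cases with
        | zero =>
          simp only [Fin.cons_zero, Fin.cons_succ] at hab
          exact absurd hab.symm (hzgood a).2.1
        | succ b =>
          simp only [Fin.cons_succ] at hab
          exact congrArg Fin.succ (hγinj hab)
    · intro a b hab
      induction a using Fin.cases with
      | zero =>
        induction b using Fin.cases with
        | zero => rfl
        | succ b =>
          simp only [Fin.cons_zero, Fin.cons_succ] at hab
          exact absurd hab (hzgood b).2.2.2.2
      | succ a =>
        induction b using Fin.cases with
        | zero =>
          simp only [Fin.cons_zero, Fin.cons_succ] at hab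
          exact absurd hab.symm (hzgood a).2.2.2.2
        | succ b =>
          simp only [Fin.cons_succ] at hab
          exact congrArg Fin.succ (hδinj hab)
    · intro a b
      induction a using Fin.cases with
      | zero =>
        induction b using Fin.cases with
        | zero => simpa using hne z hzZ
        | succ b => simpa using (hzgood b).2.2.1
      | succ a =>
        induction b using Fin.cases with
        | zero =>
          simp only [Fin.cons_zero, Fin.cons_succ]
          exact fun h => (hzgood a).2.2.2.1 h.symm
        | succ b => simpa using hγδ a b

end Stmt11Aux3
section Stmt11Aux4
open Finset
open scoped Classical

variable {n : ℕ}

lemma double_count (X : Finset (Fin n)) (T : Fin n → Finset (Fin n)) :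
    ∑ t : Fin n, (X.filter fun z => t ∈ T z).card = ∑ z ∈ X, (T z).card := by
  classical
  have h1 : ∀ t : Fin n, (X.filter fun z => t ∈ T z).card
      = ∑ z ∈ X, if t ∈ T z then 1 else 0 := by
    intro t; rw [Finset.card_filter]
  have h2 : ∀ z : Fin n, (∑ t : Fin n, if t ∈ T z then 1 else 0) = (T z).card := by
    intro z
    rw [← Finset.card_filter]
    congr 1
    rw [Finset.filter_mem_eq_inter, Finset.univ_inter]
  calc ∑ t : Fin n, (X.filter fun z => t ∈ T z).card
      = ∑ t : Fin n, ∑ z ∈ X, if t ∈ T z then 1 else 0 := by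
        exact Finset.sum_congr rfl fun t _ => h1 t
    _ = ∑ z ∈ X, ∑ t : Fin n, if t ∈ T z then 1 else 0 := Finset.sum_comm
    _ = ∑ z ∈ X, (T z).card := Finset.sum_congr rfl fun z _ => h2 z

lemma mem_vertsOf_of_dirEdge {AE : Finset (Fin n × Fin n)} (b : Bool) (u w : Fin n)
    (h : dirEdge b u w ∈ AE) : u ∈ vertsOf AE ∧ w ∈ vertsOf AE := by
  have h1 : (dirEdge b u w).1 ∈ vertsOf AE :=
    Finset.mem_union.mpr (Or.inl (Finset.mem_image_of_mem _ h))
  have h2 : (dirEdge b u w).2 ∈ vertsOf AE :=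
    Finset.mem_union.mpr (Or.inr (Finset.mem_image_of_mem _ h))
  cases b
  · simp only [dirEdge, Bool.false_eq_true, if_false] at h1 h2
    exact ⟨h2, h1⟩
  · simp only [dirEdge, if_true] at h1 h2
    exact ⟨h1, h2⟩

lemma build_absorber (E : Finset (Fin n × Fin n)) (col : Fin n × Fin n → Fin n)
    (hloop : Loopless E) (star : Fin 2 → Bool) (V' C' : Finset (Fin n))
    (s t : Fin n) (hst : s ≠ t) (hsV : s ∈ V') (htV : t ∈ V')
    (x : Fin 40 → Fin n) (hxinj : Function.Injective x)
    (he1 : ∀ i, dirEdge (star 0) s (x i) ∈ E)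
    (he2 : ∀ i, dirEdge (star 1) (x i) t ∈ E)
    (hγδ : ∀ i j, col (dirEdge (star 0) s (x i)) ≠ col (dirEdge (star 1) (x j) t)) :
    HasAbsorber E col star (fun i : Fin 40 => ({x i} : Finset (Fin n)))
      (fun i : Fin 40 => ({col (dirEdge (star 0) s (x i)),
        col (dirEdge (star 1) (x i) t)} : Finset (Fin n))) V' C' := by
  classical
  have hxs : ∀ i, x i ≠ s := fun i h => (ne_of_dirEdge_mem hloop (he1 i)) h.symm
  have hxt : ∀ i, x i ≠ t := fun i => ne_of_dirEdge_mem hloop (he2 i)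
  set AE : Finset (Fin n × Fin n) :=
    (Finset.univ.image fun j : Fin 40 => dirEdge (star 0) s (x j)) ∪
    (Finset.univ.image fun j : Fin 40 => dirEdge (star 1) (x j) t) with hAE
  have hmemAE : ∀ e, e ∈ AE ↔ ((∃ j, dirEdge (star 0) s (x j) = e) ∨
      (∃ j, dirEdge (star 1) (x j) t = e)) := by
    intro e; simp [hAE]
  have hAEsub : AE ⊆ E := by
    intro e he
    rcases (hmemAE e).mp he with ⟨j, rfl⟩ | ⟨j, rfl⟩
    · exact he1 j
    · exact he2 j
  have hverts : ∀ a, a ∈ vertsOf AE ↔ (a = s ∨ a = t ∨ ∃ j, a = x j) := by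
    intro a
    constructor
    · intro ha
      rcases Finset.mem_union.mp ha with h | h <;> obtain ⟨e, he, hea⟩ := Finset.mem_image.mp h <;>
        rcases (hmemAE e).mp he with ⟨j, rfl⟩ | ⟨j, rfl⟩
      · rcases (mem_endpoints_dirEdge (star 0) s (x j) a).mp (Or.inl hea.symm) with h' | h'
        · exact Or.inl h'
        · exact Or.inr (Or.inr ⟨j, h'⟩)
      · rcases (mem_endpoints_dirEdge (star 1) (x j) t a).mp (Or.inl hea.symm) with h' | h'
        · exact Or.inr (Or.inr ⟨j, h'⟩)
        · exact Or.inr (Or.inl h')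
      · rcases (mem_endpoints_dirEdge (star 0) s (x j) a).mp (Or.inr hea.symm) with h' | h'
        · exact Or.inl h'
        · exact Or.inr (Or.inr ⟨j, h'⟩)
      · rcases (mem_endpoints_dirEdge (star 1) (x j) t a).mp (Or.inr hea.symm) with h' | h'
        · exact Or.inr (Or.inr ⟨j, h'⟩)
        · exact Or.inr (Or.inl h')
    · rintro (rfl | rfl | ⟨j, rfl⟩)
      · exact (mem_vertsOf_of_dirEdge (star 0) a (x 0)
          ((hmemAE _).mpr (Or.inl ⟨0, rfl⟩))).1
      · exact (mem_vertsOf_of_dirEdge (star 1) (x 0) a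
          ((hmemAE _).mpr (Or.inr ⟨0, rfl⟩))).2
      · exact (mem_vertsOf_of_dirEdge (star 0) s (x j)
          ((hmemAE _).mpr (Or.inl ⟨j, rfl⟩))).2
  have hfamV : famUnion (fun i : Fin 40 => ({x i} : Finset (Fin n)))
      = Finset.univ.image x := by
    ext a; simp [famUnion, eq_comm]
  have hsdiffV : vertsOf AE \ famUnion (fun i : Fin 40 => ({x i} : Finset (Fin n)))
      = {s, t} := by
    ext a
    rw [Finset.mem_sdiff, hfamV, hverts]
    simp only [Finset.mem_image, Finset.mem_univ, true_and, Finset.mem_insert,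
      Finset.mem_singleton]
    constructor
    · rintro ⟨rfl | rfl | ⟨j, rfl⟩, hnx⟩
      · exact Or.inl rfl
      · exact Or.inr rfl
      · exact absurd ⟨j, rfl⟩ hnx
    · rintro (rfl | rfl)
      · exact ⟨Or.inl rfl, fun ⟨j, hj⟩ => hxs j hj⟩
      · exact ⟨Or.inr (Or.inl rfl), fun ⟨j, hj⟩ => hxt j hj⟩
  have hfamC : AE.image col ⊆ famUnion (fun i : Fin 40 =>
      ({col (dirEdge (star 0) s (x i)), col (dirEdge (star 1) (x i) t)} : Finset (Fin n))) := by
    intro c hc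
    obtain ⟨e, he, rfl⟩ := Finset.mem_image.mp hc
    simp only [famUnion, Finset.mem_filter, Finset.mem_univ, true_and, Finset.mem_insert,
      Finset.mem_singleton]
    rcases (hmemAE e).mp he with ⟨j, rfl⟩ | ⟨j, rfl⟩
    · exact ⟨j, Or.inl rfl⟩
    · exact ⟨j, Or.inr rfl⟩
  have hsdiffC : AE.image col \ famUnion (fun i : Fin 40 =>
      ({col (dirEdge (star 0) s (x i)), col (dirEdge (star 1) (x i) t)} : Finset (Fin n)))
      = ∅ := Finset.sdiff_eq_empty_iff_subset.mpr hfamC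
  refine ⟨AE, s, t, ⟨hAEsub, ?_⟩, ?_, ?_⟩
  · -- the 40 rainbow paths
    intro i
    set v' : Fin 3 → Fin n := fun j => if j = 0 then s else if j = 1 then x i else t with hv'
    have hv0 : v' 0 = s := rfl
    have hv1 : v' 1 = x i := rfl
    have hv2 : v' 2 = t := rfl
    have hpe0 : pathEdge v' star 0 = dirEdge (star 0) s (x i) := by
      unfold pathEdge dirEdge
      cases h : star 0 <;> simp [h, v'] <;> decide
    have hpe1 : pathEdge v' star 1 = dirEdge (star 1) (x i) t := by
      unfold pathEdge dirEdge
      cases h : star 1 <;> simp [h, v'] <;> decide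
    refine ⟨v', rfl, rfl, ⟨?_, ?_, ?_⟩, ?_, ?_⟩
    · -- injective
      intro a b hab
      fin_cases a <;> fin_cases b <;> simp [v'] at hab ⊢ <;> first
        | rfl
        | exact absurd hab hst
        | exact absurd hab.symm (hxs i)
        | exact absurd hab (hxs i)
        | exact absurd hab.symm (hxt i)
        | exact absurd hab (hxt i)
        | exact absurd hab.symm hst
    · -- edges in AE
      intro j
      fin_cases j
      · exact hpe0 ▸ (hmemAE _).mpr (Or.inl ⟨i, rfl⟩)
      · exact hpe1 ▸ (hmemAE _).mpr (Or.inr ⟨i, rfl⟩)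
    · -- rainbow
      intro a b hab
      fin_cases a <;> fin_cases b <;> simp [hpe0, hpe1] at hab ⊢
      · exact absurd hab (hγδ i i)
      · exact absurd hab.symm (hγδ i i)
    · -- vertex set
      rw [hsdiffV]
      ext a
      simp only [Finset.mem_image, Finset.mem_univ, true_and, Finset.mem_union,
        Finset.mem_insert, Finset.mem_singleton]
      constructor
      · rintro ⟨j, rfl⟩
        fin_cases j
        · exact Or.inl (Or.inl rfl)
        · exact Or.inr rfl
        · exact Or.inl (Or.inr rfl)
      · rintro ((rfl | rfl) | rfl)
        · exact ⟨0, rfl⟩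
        · exact ⟨2, rfl⟩
        · exact ⟨1, rfl⟩
    · -- color set
      rw [hsdiffC, Finset.empty_union]
      ext c
      simp only [Finset.mem_image, Finset.mem_univ, true_and, Finset.mem_insert,
        Finset.mem_singleton]
      constructor
      · rintro ⟨j, rfl⟩
        fin_cases j
        · exact Or.inl (congrArg col hpe0)
        · exact Or.inr (congrArg col hpe1)
      · rintro (rfl | rfl)
        · exact ⟨0, congrArg col hpe0⟩
        · exact ⟨1, congrArg col hpe1⟩
  · rw [hsdiffV]
    intro a ha
    rcases Finset.mem_insert.mp ha with rfl | ha
    · exact hsV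
    · rw [Finset.mem_singleton.mp ha]; exact htV
  · rw [hsdiffC]
    exact Finset.empty_subset _

end Stmt11Aux4
theorem stmt11 :
    ∀ α : ℝ, 0 < α → α ≤ 1 → ∃ ν₀ : ℝ, 0 < ν₀ ∧
    ∀ ν : ℝ, 0 < ν → ν ≤ ν₀ → ∃ ε₀ : ℝ, 0 < ε₀ ∧
    ∀ ε : ℝ, 0 < ε → ε ≤ ε₀ → ∃ n₀ : ℕ, ∀ n : ℕ, n₀ ≤ n →
    ∀ (E : Finset (Fin n × Fin n)) (col : Fin n × Fin n → Fin n),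
    EdgeColorPseudorandom n α ε E col →
    ∀ star : Fin 2 → Bool,
    ∀ V' C' : Finset (Fin n), C' ⊆ E.image col →
    (1 - ν) * n ≤ (V'.card : ℝ) → (1 - ν) * n ≤ (C'.card : ℝ) →
    ∃ v c d : Fin 40 → Fin n,
      Function.Injective v ∧ (∀ i, v i ∈ V') ∧
      Function.Injective c ∧ Function.Injective d ∧ (∀ i j, c i ≠ d j) ∧
      (∀ i, c i ∈ C') ∧ (∀ i, d i ∈ C') ∧
      HasAbsorber E col star (fun i : Fin 40 => ({v i} : Finset (Fin n)))
        (fun i : Fin 40 => ({c i, d i} : Finset (Fin n))) V' C' := by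
  classical
  intro α hα hα1
  refine ⟨α / 16, by positivity, ?_⟩
  intro ν hν hνle
  refine ⟨1, one_pos, ?_⟩
  intro ε hε hεle
  refine ⟨⌈Real.exp (10000 / α ^ 2)⌉₊ + 2, ?_⟩
  intro n hn E col hPR star V' C' hC'sub hV' hC'
  obtain ⟨hloop, himg, hdeg, hcond2, hcond3, hcond4, hcond5, hcond6⟩ := hPR
  -- basic numeric facts
  have hα2 : (0 : ℝ) < α ^ 2 := by positivity
  have hnexp : Real.exp (10000 / α ^ 2) ≤ (n : ℝ) := by
    calc Real.exp (10000 / α ^ 2) ≤ (⌈Real.exp (10000 / α ^ 2)⌉₊ : ℝ) := Nat.le_ceil _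
      _ ≤ (n : ℝ) := by exact_mod_cast le_trans (Nat.le_add_right _ 2) hn
  have hn2 : 2 ≤ n := le_trans (Nat.le_add_left _ _) hn
  have hnpos : (0 : ℝ) < n := by
    have : (2 : ℝ) ≤ n := by exact_mod_cast hn2
    linarith
  have hlogn : 10000 / α ^ 2 ≤ Real.log n :=
    (Real.le_log_iff_exp_le hnpos).mpr hnexp
  have hlogpos : (0 : ℝ) < Real.log n := lt_of_lt_of_le (by positivity) hlogn
  have hnα : 10000 / α ^ 2 ≤ (n : ℝ) := by
    have h1 : 10000 / α ^ 2 + 1 ≤ Real.exp (10000 / α ^ 2) := Real.add_one_le_exp _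
    linarith
  have hα2n : (10000 : ℝ) ≤ α ^ 2 * n := by
    rw [div_le_iff₀ hα2] at hnα
    linarith [mul_comm (α ^ 2) (n : ℝ)]
  have hαn : (10000 : ℝ) ≤ α * n := by
    nlinarith
  have hνα : ν ≤ α / 16 := hνle
  have hνn : ν * n ≤ α / 16 * n := mul_le_mul_of_nonneg_right hνα hnpos.le
  have hαnlen : α * (n : ℝ) ≤ n := mul_le_of_le_one_left hnpos.le hα1
  -- complements are small
  have hcardV : ((Finset.univ \ V').card : ℝ) ≤ ν * n := by
    have h1 : (Finset.univ \ V').card + V'.card = (Finset.univ : Finset (Fin n)).card :=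
      Finset.card_sdiff_add_card_eq_card (Finset.subset_univ _)
    have h2 : ((Finset.univ : Finset (Fin n)).card : ℝ) = n := by
      rw [Finset.card_univ, Fintype.card_fin]
    have h3 := congrArg (Nat.cast (R := ℝ)) h1
    push_cast at h3
    nlinarith
  have hcardC : ((Finset.univ \ C').card : ℝ) ≤ ν * n := by
    have h1 : (Finset.univ \ C').card + C'.card = (Finset.univ : Finset (Fin n)).card :=
      Finset.card_sdiff_add_card_eq_card (Finset.subset_univ _)
    have h3 := congrArg (Nat.cast (R := ℝ)) h1
    push_cast at h3
    rw [Finset.card_univ, Fintype.card_fin] at h3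
    nlinarith
  -- pick s
  have hV'ne : V'.Nonempty := by
    rw [← Finset.card_pos]
    by_contra h
    push_neg at h
    interval_cases hc : V'.card
    · push_cast at hV'
      linarith
  obtain ⟨s, hsV⟩ := hV'ne
  -- the set of good middle vertices
  set X0 : Finset (Fin n) := Finset.univ.filter fun z => dirEdge (star 0) s z ∈ E ∧
    col (dirEdge (star 0) s z) ∈ C' ∧ col (dirEdge (star 0) s z) ∉ (∅ : Finset (Fin n)) ∧
    z ∈ V' ∧ z ∉ (∅ : Finset (Fin n)) with hX0def
  have hX0card : (α * n / 3 : ℝ) ≤ X0.card := by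
    have h := step_count E col (star 0) s C' V' ∅ ∅ (α * n / 2) (hcond6 s (star 0))
    rw [← hX0def] at h
    simp only [Finset.card_empty, Nat.cast_zero] at h
    linarith
  -- the set of good right endpoints for each middle vertex
  set T : Fin n → Finset (Fin n) := fun z => Finset.univ.filter fun w =>
    dirEdge (star 1) z w ∈ E ∧ col (dirEdge (star 1) z w) ∈ C' ∧
    col (dirEdge (star 1) z w) ∉ ({col (dirEdge (star 0) s z)} : Finset (Fin n)) ∧
    w ∈ V' ∧ w ∉ ({s} : Finset (Fin n)) with hTdef
  have hTcard : ∀ z : Fin n, (α * n / 4 : ℝ) ≤ (T z).card := by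
    intro z
    have h := step_count E col (star 1) z C' V' {col (dirEdge (star 0) s z)} {s}
      (α * n / 2) (hcond6 z (star 1))
    simp only [Finset.card_singleton, Nat.cast_one] at h
    linarith
  -- double counting and pigeonhole
  set Z : Fin n → Finset (Fin n) := fun t => X0.filter fun z => t ∈ T z with hZdef
  have hsum : ∑ t : Fin n, ((Z t).card : ℝ) = ∑ z ∈ X0, ((T z).card : ℝ) := by
    have := double_count X0 T
    exact_mod_cast congrArg (Nat.cast (R := ℝ)) this
  have hlower : (α ^ 2 * n ^ 2 / 12 : ℝ) ≤ ∑ t : Fin n, ((Z t).card : ℝ) := by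
    rw [hsum]
    have h1 : ∑ z ∈ X0, (α * n / 4 : ℝ) ≤ ∑ z ∈ X0, ((T z).card : ℝ) :=
      Finset.sum_le_sum fun z _ => hTcard z
    rw [Finset.sum_const, nsmul_eq_mul] at h1
    have h2 : (α * n / 3) * (α * n / 4) ≤ (X0.card : ℝ) * (α * n / 4) :=
      mul_le_mul_of_nonneg_right hX0card (by positivity)
    have h3 : (α * n / 3) * (α * n / 4) = α ^ 2 * n ^ 2 / 12 := by ring
    linarith
  have hpigeon : ∃ t0 : Fin n, (α ^ 2 * n / 12 : ℝ) ≤ ((Z t0).card : ℝ) := by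
    by_contra h
    push_neg at h
    have hne : (Finset.univ : Finset (Fin n)).Nonempty := ⟨⟨0, by omega⟩, Finset.mem_univ _⟩
    have := Finset.sum_lt_sum_of_nonempty hne fun t _ => h t
    rw [Finset.sum_const, Finset.card_univ, Fintype.card_fin, nsmul_eq_mul] at this
    have h2 : (n : ℝ) * (α ^ 2 * n / 12) = α ^ 2 * n ^ 2 / 12 := by ring
    linarith
  obtain ⟨t0, hZt0⟩ := hpigeon
  -- membership facts
  have hmemZ : ∀ z ∈ Z t0, dirEdge (star 0) s z ∈ E ∧ col (dirEdge (star 0) s z) ∈ C' ∧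
      z ∈ V' ∧ dirEdge (star 1) z t0 ∈ E ∧ col (dirEdge (star 1) z t0) ∈ C' ∧
      col (dirEdge (star 1) z t0) ≠ col (dirEdge (star 0) s z) ∧ t0 ∈ V' ∧ t0 ≠ s := by
    intro z hz
    rw [hZdef] at hz
    obtain ⟨hzX0, hzT⟩ := Finset.mem_filter.mp hz
    rw [hX0def] at hzX0
    obtain ⟨-, he1, hc1, -, hzV, -⟩ := Finset.mem_filter.mp hzX0
    rw [hTdef] at hzT
    obtain ⟨-, he2, hc2, hc12, htV, hts⟩ := Finset.mem_filter.mp hzT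
    rw [Finset.mem_singleton] at hc12
    rw [Finset.mem_singleton] at hts
    exact ⟨he1, hc1, hzV, he2, hc2, hc12, htV, hts⟩
  -- greedy selection
  set γ : Fin n → Fin n := fun z => col (dirEdge (star 0) s z) with hγdef
  set δ : Fin n → Fin n := fun z => col (dirEdge (star 1) z t0) with hδdef
  set B : ℝ := (n : ℝ) / Real.log n with hBdef
  have hBpos : (0 : ℝ) ≤ B := by positivity
  have hγfib : ∀ c : Fin n, (((Z t0).filter fun z => γ z = c).card : ℝ) ≤ B := by
    intro c
    have h1 := fiber_left E col (star 0) s c (Z t0) (fun z hz => (hmemZ z hz).1)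
    have h2 := hcond3 c s (star 0)
    calc (((Z t0).filter fun z => γ z = c).card : ℝ)
        ≤ ((E.filter fun e => col e = c ∧ myEnd (star 0) e = s).card : ℝ) := by
          exact_mod_cast h1
      _ ≤ B := h2
  have hδfib : ∀ c : Fin n, (((Z t0).filter fun z => δ z = c).card : ℝ) ≤ B := by
    intro c
    have h1 := fiber_right E col (star 1) t0 c (Z t0) (fun z hz => (hmemZ z hz).2.2.2.1)
    have h2 := hcond3 c t0 (!(star 1))
    calc (((Z t0).filter fun z => δ z = c).card : ℝ)
        ≤ ((E.filter fun e => col e = c ∧ myEnd (!(star 1)) e = t0).card : ℝ) := by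
          exact_mod_cast h1
      _ ≤ B := h2
  have hBsmall : B ≤ α ^ 2 * n / 10000 := by
    rw [hBdef]
    rw [div_le_iff₀ hlogpos]
    rw [div_le_iff₀ hα2] at hnα
    calc (n : ℝ) = α ^ 2 * n / 10000 * (10000 / α ^ 2) := by field_simp
      _ ≤ α ^ 2 * n / 10000 * Real.log n := by
          apply mul_le_mul_of_nonneg_left hlogn (by positivity)
  have hgcard : ((40 : ℕ) : ℝ) * (4 * B + 1) < ((Z t0).card : ℝ) := by
    push_cast
    have h40 : (40 : ℝ) ≤ α ^ 2 * n / 250 := by linarith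
    linarith
  obtain ⟨x, hxZ, hxinj, hγinj, hδinj, hγδ⟩ := greedy (Z t0) γ δ
    (fun z hz => ((hmemZ z hz).2.2.2.2.2.1).symm) B hBpos hγfib hδfib 40 hgcard
  -- extract a witness to get facts about t0
  have hZt0ne : (Z t0).Nonempty := by
    rw [← Finset.card_pos]
    by_contra h
    push_neg at h
    interval_cases hc : (Z t0).card
    · push_cast at hZt0
      linarith
  obtain ⟨z0, hz0⟩ := hZt0ne
  have ht0V : t0 ∈ V' := (hmemZ z0 hz0).2.2.2.2.2.2.1
  have ht0s : t0 ≠ s := (hmemZ z0 hz0).2.2.2.2.2.2.2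
  -- assemble
  refine ⟨x, fun i => γ (x i), fun i => δ (x i), hxinj,
    fun i => (hmemZ (x i) (hxZ i)).2.2.1, hγinj, hδinj, hγδ,
    fun i => (hmemZ (x i) (hxZ i)).2.1,
    fun i => (hmemZ (x i) (hxZ i)).2.2.2.2.1, ?_⟩
  exact build_absorber E col hloop star V' C' s t0 (Ne.symm ht0s) hsV ht0V x hxinj
    (fun i => (hmemZ (x i) (hxZ i)).1) (fun i => (hmemZ (x i) (hxZ i)).2.2.2.1)
    (fun i j => (hγδ i j))
end
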